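/- arXiv:1602.00927 — 4 statements merged into one kernel-verified Lean document; each statement's English description precedes it below -/
import Mathlib

section
/- Let {P_n}_{n∈ℕ^d} and {Q_n}_{n∈ℕ^d} be families of positive finite Borel measures on 𝕋^d, and let P, Q be positive finite Borel measures on 𝕋^d. If P_n converges weakly to P and Q_n converges weakly to Q (i.e., ∫ f dP_n → ∫ f dP and ∫ f dQ_n → ∫ f dQ for every continuous f : 𝕋^d → ℝ, as n → ∞ in ℕ^d), then limsup_n ρ(P_n, Q_n) ≤ ρ(P, Q). -/
/-!
The affinity is the infimum of `(∫ f dP + ∫ f⁻¹ dQ) / 2` over continuous `f` with values in some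
`[a, b] ⊆ (0, ∞)`. One inequality is the pointwise AM–GM bound `√p √q ≤ (p f + q f⁻¹) / 2` for the
densities `p, q` of `P, Q` with respect to `P + Q`. Conversely the regularised optimiser
`√((q + δ) / (p + δ))` comes within `O(√δ)` of the affinity, and clamping an `L¹(P + Q)`-approximation
of it by continuous functions changes the objective by little, since `f ↦ f⁻¹` is Lipschitz on `[a, b]`.
Being an infimum of functions that are continuous under weak convergence, the affinity is upper
semicontinuous.
-/

open MeasureTheory Filter
open scoped Topology
open Set

noncomputable section

/-- The `d`-torus `𝕋^d = {z ∈ ℂ^d : |z_j| = 1 for all j}`. -/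
abbrev Torus (d : ℕ) := { z : Fin d → ℂ // ∀ j, ‖z j‖ = 1 }

/-- The affinity `ρ(P,Q) = ∫ (dP/dν)^{1/2} (dQ/dν)^{1/2} dν`, computed with the choice
`ν = P + Q` (the value does not depend on the choice of `ν` with `P ≪ ν` and `Q ≪ ν`). -/
def affinity {d : ℕ} (P Q : Measure (Torus d)) : ℝ :=
  ∫ z, Real.sqrt ((P.rnDeriv (P + Q) z).toReal) * Real.sqrt ((Q.rnDeriv (P + Q) z).toReal)
    ∂(P + Q)

end

theorem inv_mem_Icc_inv {x a b : ℝ} (ha : 0 < a) (hx : x ∈ Icc a b) : x⁻¹ ∈ Icc b⁻¹ a⁻¹ :=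
  ⟨inv_anti₀ (ha.trans_le hx.1) hx.2, inv_anti₀ ha hx.1⟩

theorem inv_sub_inv_le_of_le {x y a : ℝ} (ha : 0 < a) (hx : a ≤ x) (hy : a ≤ y) :
    x⁻¹ - y⁻¹ ≤ (a ^ 2)⁻¹ * |x - y| := by
  have hx0 := ha.trans_le hx
  have hy0 := ha.trans_le hy
  rw [inv_sub_inv hx0.ne' hy0.ne', ← div_eq_inv_mul]
  calc (y - x) / (x * y) ≤ |x - y| / (x * y) := by
        gcongr; rw [abs_sub_comm]; exact le_abs_self _
    _ ≤ |x - y| / a ^ 2 := by gcongr; rw [sq]; gcongr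

theorem sqrt_mul_sqrt_le_of_pos {p q t : ℝ} (hp : 0 ≤ p) (hq : 0 ≤ q) (ht : 0 < t) :
    √p * √q ≤ (p * t + q * t⁻¹) / 2 := by
  have h : √p * √q = √(p * t) * √(q * t⁻¹) := by
    rw [← Real.sqrt_mul hp, ← Real.sqrt_mul (mul_nonneg hp ht.le)]
    congr 1
    field_simp
  have := two_mul_le_add_sq (√(p * t)) (√(q * t⁻¹))
  rw [Real.sq_sqrt (by positivity), Real.sq_sqrt (by positivity)] at this
  linarith

theorem sqrt_add_mul_sqrt_add_le {p q δ : ℝ} (hp0 : 0 ≤ p) (hp1 : p ≤ 1) (hq0 : 0 ≤ q)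
    (hq1 : q ≤ 1) (hδ0 : 0 ≤ δ) (hδ1 : δ ≤ 1) :
    √(p + δ) * √(q + δ) ≤ √p * √q + 2 * √δ := by
  rw [← Real.sqrt_mul (by linarith), Real.sqrt_le_iff]
  refine ⟨by positivity, ?_⟩
  rw [← Real.sqrt_mul hp0 q]
  nlinarith [Real.sq_sqrt (mul_nonneg hp0 hq0), Real.sq_sqrt hδ0, Real.sqrt_nonneg (p * q),
    Real.sqrt_nonneg δ, mul_nonneg (Real.sqrt_nonneg (p * q)) (Real.sqrt_nonneg δ)]

theorem mul_sqrt_div_add_mul_sqrt_div_le {p q δ : ℝ} (hp0 : 0 ≤ p) (hp1 : p ≤ 1) (hq0 : 0 ≤ q)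
    (hq1 : q ≤ 1) (hδ0 : 0 < δ) (hδ1 : δ ≤ 1) :
    p * √((q + δ) / (p + δ)) + q * √((p + δ) / (q + δ)) ≤ 2 * (√p * √q) + 4 * √δ := by
  have hA : 0 < √(p + δ) := Real.sqrt_pos.mpr (by linarith)
  have hB : 0 < √(q + δ) := Real.sqrt_pos.mpr (by linarith)
  have hAA := Real.mul_self_sqrt (show 0 ≤ p + δ by linarith)
  have hBB := Real.mul_self_sqrt (show 0 ≤ q + δ by linarith)
  have h1 : p * √((q + δ) / (p + δ)) ≤ √(p + δ) * √(q + δ) := by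
    rw [Real.sqrt_div' _ (by linarith), mul_div_assoc', div_le_iff₀ hA]
    nlinarith
  have h2 : q * √((p + δ) / (q + δ)) ≤ √(p + δ) * √(q + δ) := by
    rw [Real.sqrt_div' _ (by linarith), mul_div_assoc', div_le_iff₀ hB]
    nlinarith
  linarith [sqrt_add_mul_sqrt_add_le hp0 hp1 hq0 hq1 hδ0.le hδ1]

section Densities

variable {X : Type*} [MeasurableSpace X]

theorem integrable_of_forall_mem_Icc {μ : Measure X} [IsFiniteMeasure μ] {f : X → ℝ} {a b : ℝ}
    (hf : Measurable f) (hfab : ∀ z, f z ∈ Icc a b) : Integrable f μ :=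
  Integrable.of_bound hf.aestronglyMeasurable (max |a| |b|) <| Eventually.of_forall fun z =>
    abs_le_max_abs_abs (hfab z).1 (hfab z).2

theorem MeasureTheory.Integrable.mul_of_forall_mem_Icc {μ : Measure X} {p g : X → ℝ} {a b : ℝ}
    (hp : Integrable p μ) (hg : Measurable g) (hgab : ∀ z, g z ∈ Icc a b) :
    Integrable (fun z => p z * g z) μ :=
  hp.mul_bdd hg.aestronglyMeasurable <| Eventually.of_forall fun z =>
    abs_le_max_abs_abs (hgab z).1 (hgab z).2

theorem integral_eq_integral_toReal_rnDeriv_mul {μ ν : Measure X} [IsFiniteMeasure μ]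
    [SigmaFinite ν] (h : μ ≪ ν) (g : X → ℝ) :
    ∫ z, g z ∂μ = ∫ z, (μ.rnDeriv ν z).toReal * g z ∂ν :=
  (integral_rnDeriv_smul h).symm

theorem ae_toReal_rnDeriv_le_one {μ ν : Measure X} [SigmaFinite ν] (h : μ ≤ ν) :
    ∀ᵐ z ∂ν, (μ.rnDeriv ν z).toReal ≤ 1 := by
  filter_upwards [Measure.rnDeriv_le_one_of_le h] with z hz
  exact ENNReal.toReal_le_of_le_ofReal zero_le_one (by simpa using hz)

variable {ν : Measure X} {p q g : X → ℝ} {a b : ℝ}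

theorem integral_sqrt_mul_sqrt_le (hp : Integrable p ν) (hq : Integrable q ν)
    (hp0 : ∀ z, 0 ≤ p z) (hq0 : ∀ z, 0 ≤ q z) (hg : Measurable g) (ha : 0 < a)
    (hgab : ∀ z, g z ∈ Icc a b) :
    ∫ z, √(p z) * √(q z) ∂ν ≤ (∫ z, p z * g z ∂ν + ∫ z, q z * (g z)⁻¹ ∂ν) / 2 := by
  have hpg := hp.mul_of_forall_mem_Icc hg hgab
  have hqg : Integrable (fun z => q z * (g z)⁻¹) ν :=
    hq.mul_of_forall_mem_Icc hg.inv fun z => inv_mem_Icc_inv ha (hgab z)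
  rw [← integral_add hpg hqg, ← integral_div]
  refine integral_mono_of_nonneg (Eventually.of_forall fun z => by positivity)
    ((hpg.add hqg).div_const 2) (Eventually.of_forall fun z => ?_)
  exact sqrt_mul_sqrt_le_of_pos (hp0 z) (hq0 z) (ha.trans_le (hgab z).1)

theorem exists_integral_mul_add_integral_mul_inv_le [IsFiniteMeasure ν] (hp : Measurable p)
    (hq : Measurable q) (hp0 : ∀ z, 0 ≤ p z) (hq0 : ∀ z, 0 ≤ q z) (hp1 : ∀ᵐ z ∂ν, p z ≤ 1)
    (hq1 : ∀ᵐ z ∂ν, q z ≤ 1) {ε : ℝ} (hε : 0 < ε) :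
    ∃ a b : ℝ, ∃ g : X → ℝ, 0 < a ∧ a ≤ b ∧ Measurable g ∧ (∀ z, g z ∈ Icc a b) ∧
      (∫ z, p z * g z ∂ν + ∫ z, q z * (g z)⁻¹ ∂ν) / 2 ≤ ∫ z, √(p z) * √(q z) ∂ν + ε := by
  obtain ⟨δ, ⟨hδ1, hδε⟩, hδ0⟩ : ∃ δ : ℝ, (δ ≤ 1 ∧ 2 * √δ * ν.real univ ≤ ε) ∧ 0 < δ := by
    have hsqrt : Tendsto (fun δ : ℝ => 2 * √δ * ν.real univ) (𝓝 0) (𝓝 0) := by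
      simpa using ((Real.continuous_sqrt.tendsto 0).const_mul 2).mul_const (ν.real univ)
    exact (((eventually_le_nhds zero_lt_one).and (hsqrt.eventually (ge_mem_nhds hε))).filter_mono
      nhdsWithin_le_nhds |>.and (self_mem_nhdsWithin (s := Ioi 0))).exists
  have hp' : Integrable p ν := Integrable.of_bound hp.aestronglyMeasurable 1 <| by
    filter_upwards [hp1] with z hz using (Real.norm_of_nonneg (hp0 z)).trans_le hz
  have hq' : Integrable q ν := Integrable.of_bound hq.aestronglyMeasurable 1 <| by
    filter_upwards [hq1] with z hz using (Real.norm_of_nonneg (hq0 z)).trans_le hz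
  have hratio : ∀ {x y : ℝ}, 0 ≤ x → x ≤ 1 → 0 ≤ y → y ≤ 1 →
      (y + δ) / (x + δ) ∈ Icc (δ / (1 + δ)) ((1 + δ) / δ) := fun hx0 hx1 hy0 hy1 =>
    ⟨div_le_div₀ (by linarith) (by linarith) (by linarith) (by linarith),
      div_le_div₀ (by linarith) (by linarith) hδ0 (by linarith)⟩
  -- The optimiser `√(q / p)` is regularised by `δ`, and `p, q` (which are `≤ 1` only a.e.) are
  -- truncated at `1`, so that `g` is bounded away from `0` and `∞` everywhere.
  set g : X → ℝ := fun z => √((min (q z) 1 + δ) / (min (p z) 1 + δ)) with hg_def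
  have hgab : ∀ z, g z ∈ Icc √(δ / (1 + δ)) √((1 + δ) / δ) := fun z =>
    have h := hratio (le_min (hp0 z) zero_le_one) (min_le_right _ 1)
      (le_min (hq0 z) zero_le_one) (min_le_right _ 1)
    ⟨Real.sqrt_le_sqrt h.1, Real.sqrt_le_sqrt h.2⟩
  have hab := hratio le_rfl zero_le_one le_rfl zero_le_one
  refine ⟨_, _, g, by positivity, Real.sqrt_le_sqrt (hab.1.trans hab.2), by fun_prop, hgab, ?_⟩
  have hpg : Integrable (fun z => p z * g z) ν :=
    hp'.mul_of_forall_mem_Icc (by fun_prop) hgab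
  have hqg : Integrable (fun z => q z * (g z)⁻¹) ν :=
    hq'.mul_of_forall_mem_Icc (by fun_prop) fun z => inv_mem_Icc_inv (by positivity) (hgab z)
  have hsq : Integrable (fun z => √(p z) * √(q z)) ν :=
    Integrable.of_bound (by fun_prop : Measurable _).aestronglyMeasurable 1 <| by
      filter_upwards [hp1, hq1] with z hpz hqz
      rw [Real.norm_of_nonneg (by positivity)]
      exact mul_le_one₀ (Real.sqrt_le_one.2 hpz) (Real.sqrt_nonneg _) (Real.sqrt_le_one.2 hqz)
  have hpt : ∀ᵐ z ∂ν, p z * g z + q z * (g z)⁻¹ ≤ 2 * (√(p z) * √(q z)) + 4 * √δ := by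
    filter_upwards [hp1, hq1] with z hpz hqz
    have hgz : g z = √((q z + δ) / (p z + δ)) := by
      simp only [hg_def, min_eq_left hpz, min_eq_left hqz]
    rw [hgz, ← Real.sqrt_inv, inv_div]
    exact mul_sqrt_div_add_mul_sqrt_div_le (hp0 z) hpz (hq0 z) hqz hδ0 hδ1
  calc (∫ z, p z * g z ∂ν + ∫ z, q z * (g z)⁻¹ ∂ν) / 2
      = (∫ z, (p z * g z + q z * (g z)⁻¹) ∂ν) / 2 := by rw [integral_add hpg hqg]
    _ ≤ (∫ z, (2 * (√(p z) * √(q z)) + 4 * √δ) ∂ν) / 2 := by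
      refine div_le_div_of_nonneg_right ?_ zero_le_two
      exact integral_mono_ae (hpg.add hqg) ((hsq.const_mul 2).add (integrable_const _)) hpt
    _ = ∫ z, √(p z) * √(q z) ∂ν + 2 * √δ * ν.real univ := by
      rw [integral_add (hsq.const_mul 2) (integrable_const _), integral_const_mul, integral_const,
        smul_eq_mul]
      ring
    _ ≤ ∫ z, √(p z) * √(q z) ∂ν + ε := by linarith

theorem integral_add_integral_inv_le_add {P Q : Measure X} [IsFiniteMeasure P]
    [IsFiniteMeasure Q] {f : X → ℝ} (hf : Measurable f) (hg : Measurable g) (ha : 0 < a)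
    (hfab : ∀ z, f z ∈ Icc a b) (hgab : ∀ z, g z ∈ Icc a b) :
    ∫ z, f z ∂P + ∫ z, (f z)⁻¹ ∂Q ≤
      ∫ z, g z ∂P + ∫ z, (g z)⁻¹ ∂Q + (1 + (a ^ 2)⁻¹) * ∫ z, |f z - g z| ∂(P + Q) := by
  have hfP : Integrable f P := integrable_of_forall_mem_Icc hf hfab
  have hgP : Integrable g P := integrable_of_forall_mem_Icc hg hgab
  have hfQ : Integrable f Q := integrable_of_forall_mem_Icc hf hfab
  have hgQ : Integrable g Q := integrable_of_forall_mem_Icc hg hgab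
  have hfQ_inv : Integrable (fun z => (f z)⁻¹) Q :=
    integrable_of_forall_mem_Icc hf.inv fun z => inv_mem_Icc_inv ha (hfab z)
  have hgQ_inv : Integrable (fun z => (g z)⁻¹) Q :=
    integrable_of_forall_mem_Icc hg.inv fun z => inv_mem_Icc_inv ha (hgab z)
  have hP : ∫ z, f z ∂P - ∫ z, g z ∂P ≤ ∫ z, |f z - g z| ∂P := by
    rw [← integral_sub hfP hgP]
    exact integral_mono (hfP.sub hgP) (hfP.sub hgP).abs fun z => le_abs_self _
  have hQ : ∫ z, (f z)⁻¹ ∂Q - ∫ z, (g z)⁻¹ ∂Q ≤ (a ^ 2)⁻¹ * ∫ z, |f z - g z| ∂Q := by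
    rw [← integral_sub hfQ_inv hgQ_inv, ← integral_const_mul]
    exact integral_mono (hfQ_inv.sub hgQ_inv) ((hfQ.sub hgQ).abs.const_mul _) fun z =>
      inv_sub_inv_le_of_le ha (hfab z).1 (hgab z).1
  rw [integral_add_measure (f := fun z => |f z - g z|) (hfP.sub hgP).abs (hfQ.sub hgQ).abs]
  have hP0 : 0 ≤ ∫ z, |f z - g z| ∂P := integral_nonneg fun z => abs_nonneg _
  have hQ0 : 0 ≤ ∫ z, |f z - g z| ∂Q := integral_nonneg fun z => abs_nonneg _
  nlinarith [mul_nonneg (inv_nonneg.2 (sq_nonneg a)) hP0]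

section Approximation

variable [TopologicalSpace X] [NormalSpace X] [BorelSpace X]

theorem exists_continuous_forall_mem_Icc_integral_abs_sub_le [IsFiniteMeasure ν] [ν.WeaklyRegular]
    (hg : Measurable g) (hab : a ≤ b) (hgab : ∀ z, g z ∈ Icc a b) {ε : ℝ} (hε : 0 < ε) :
    ∃ f : X → ℝ, Continuous f ∧ (∀ z, f z ∈ Icc a b) ∧ ∫ z, |f z - g z| ∂ν ≤ ε := by
  have hgi : Integrable g ν := integrable_of_forall_mem_Icc hg hgab
  obtain ⟨h, hgh, hhi⟩ := hgi.exists_boundedContinuous_integral_sub_le hε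
  refine ⟨fun z => projIcc a b hab (h z), by fun_prop, fun z => (projIcc a b hab (h z)).2, ?_⟩
  refine le_trans (integral_mono_of_nonneg (Eventually.of_forall fun z => abs_nonneg _)
    (hgi.sub hhi).norm (Eventually.of_forall fun z => ?_)) hgh
  calc |(projIcc a b hab (h z) : ℝ) - g z|
      = |(projIcc a b hab (h z) : ℝ) - projIcc a b hab (g z)| := by
        rw [projIcc_of_mem hab (hgab z)]
    _ ≤ |h z - g z| := abs_projIcc_sub_projIcc hab
    _ = ‖g z - h z‖ := by rw [Real.norm_eq_abs, abs_sub_comm]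

theorem exists_continuous_integral_add_integral_inv_le {P Q : Measure X} [IsFiniteMeasure P]
    [IsFiniteMeasure Q] [(P + Q).WeaklyRegular] (hg : Measurable g) (ha : 0 < a) (hab : a ≤ b)
    (hgab : ∀ z, g z ∈ Icc a b) {ε : ℝ} (hε : 0 < ε) :
    ∃ f : X → ℝ, Continuous f ∧ (∀ z, f z ∈ Icc a b) ∧
      ∫ z, f z ∂P + ∫ z, (f z)⁻¹ ∂Q ≤ ∫ z, g z ∂P + ∫ z, (g z)⁻¹ ∂Q + ε := by
  have hC : 0 < 1 + (a ^ 2)⁻¹ := by positivity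
  obtain ⟨f, hf, hfab, hfg⟩ :=
    exists_continuous_forall_mem_Icc_integral_abs_sub_le (ν := P + Q) hg hab hgab (div_pos hε hC)
  refine ⟨f, hf, hfab, (integral_add_integral_inv_le_add hf.measurable hg ha hfab hgab).trans ?_⟩
  have := mul_le_mul_of_nonneg_left hfg hC.le
  rw [mul_div_cancel₀ _ hC.ne'] at this
  linarith

end Approximation

end Densities

theorem affinity_nonneg {d : ℕ} (P Q : Measure (Torus d)) : 0 ≤ affinity P Q :=
  integral_nonneg fun _ => by positivity

section Affinity

variable {d : ℕ} (P Q : Measure (Torus d)) [IsFiniteMeasure P] [IsFiniteMeasure Q]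

theorem affinity_le {g : Torus d → ℝ} {a b : ℝ} (hg : Measurable g) (ha : 0 < a)
    (hgab : ∀ z, g z ∈ Icc a b) :
    affinity P Q ≤ (∫ z, g z ∂P + ∫ z, (g z)⁻¹ ∂Q) / 2 := by
  rw [integral_eq_integral_toReal_rnDeriv_mul (Measure.AbsolutelyContinuous.rfl.add_right Q) g,
    integral_eq_integral_toReal_rnDeriv_mul (Measure.AbsolutelyContinuous.rfl.add_right' P)
      fun z => (g z)⁻¹]
  exact integral_sqrt_mul_sqrt_le (Measure.integrable_toReal_rnDeriv (μ := P))
    (Measure.integrable_toReal_rnDeriv (μ := Q)) (fun _ => ENNReal.toReal_nonneg)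
    (fun _ => ENNReal.toReal_nonneg) hg ha hgab

theorem exists_continuous_le_affinity_add {ε : ℝ} (hε : 0 < ε) :
    ∃ a b : ℝ, ∃ f : Torus d → ℝ, 0 < a ∧ Continuous f ∧ (∀ z, f z ∈ Icc a b) ∧
      (∫ z, f z ∂P + ∫ z, (f z)⁻¹ ∂Q) / 2 ≤ affinity P Q + ε := by
  obtain ⟨a, b, g, ha, hab, hg, hgab, hgε⟩ := exists_integral_mul_add_integral_mul_inv_le
    (Measure.measurable_rnDeriv P (P + Q)).ennreal_toReal
    (Measure.measurable_rnDeriv Q (P + Q)).ennreal_toReal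
    (fun _ => ENNReal.toReal_nonneg) (fun _ => ENNReal.toReal_nonneg)
    (ae_toReal_rnDeriv_le_one (Measure.le_add_right le_rfl))
    (ae_toReal_rnDeriv_le_one (Measure.le_add_left le_rfl)) (half_pos hε)
  rw [← integral_eq_integral_toReal_rnDeriv_mul (Measure.AbsolutelyContinuous.rfl.add_right Q) g,
    ← integral_eq_integral_toReal_rnDeriv_mul (Measure.AbsolutelyContinuous.rfl.add_right' P)
      fun z => (g z)⁻¹]
    at hgε
  obtain ⟨f, hf, hfab, hfg⟩ :=
    exists_continuous_integral_add_integral_inv_le (P := P) (Q := Q) hg ha hab hgab hε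
  refine ⟨a, b, f, ha, hf, hfab, ?_⟩
  change _ ≤ affinity P Q + ε / 2 at hgε
  linarith

end Affinity

theorem statement2_general {d : ℕ}
    (P Q : (Fin d → ℕ) → Measure (Torus d)) (Plim Qlim : Measure (Torus d))
    (hPfin : ∀ n, IsFiniteMeasure (P n)) (hQfin : ∀ n, IsFiniteMeasure (Q n))
    [IsFiniteMeasure Plim] [IsFiniteMeasure Qlim]
    (hP : ∀ f : ContinuousMap (Torus d) ℝ,
      Tendsto (fun n : Fin d → ℕ => ∫ z, f z ∂(P n)) atTop (𝓝 (∫ z, f z ∂Plim)))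
    (hQ : ∀ f : ContinuousMap (Torus d) ℝ,
      Tendsto (fun n : Fin d → ℕ => ∫ z, f z ∂(Q n)) atTop (𝓝 (∫ z, f z ∂Qlim))) :
    Filter.limsup (fun n : Fin d → ℕ => affinity (P n) (Q n)) atTop ≤ affinity Plim Qlim := by
  refine le_of_forall_pos_le_add fun ε hε => ?_
  obtain ⟨a, b, f, ha, hf, hfab, hfε⟩ := exists_continuous_le_affinity_add Plim Qlim (half_pos hε)
  have hf_inv : Continuous fun z => (f z)⁻¹ :=
    hf.inv₀ fun z => (ha.trans_le (hfab z).1).ne'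
  have hlim : Tendsto (fun n => (∫ z, f z ∂(P n) + ∫ z, (f z)⁻¹ ∂(Q n)) / 2) atTop
      (𝓝 ((∫ z, f z ∂Plim + ∫ z, (f z)⁻¹ ∂Qlim) / 2)) :=
    ((hP ⟨f, hf⟩).add (hQ ⟨_, hf_inv⟩)).div_const 2
  refine limsup_le_of_le (isCoboundedUnder_le_of_le atTop fun n => affinity_nonneg (P n) (Q n)) ?_
  filter_upwards [hlim.eventually_le_const (by linarith : _ < affinity Plim Qlim + ε)] with n hn
  have := hPfin n
  have := hQfin n
  exact (affinity_le (P n) (Q n) hf.measurable ha hfab).trans hn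

/-- if `P n` converges weakly to `P∞` and `Q n` converges weakly to `Q∞`
(as `n → ∞` in `ℕ^d`), then `limsup_n ρ(P n, Q n) ≤ ρ(P∞, Q∞)`. -/
theorem statement2 {d : ℕ} (hd : 1 ≤ d)
    (P Q : (Fin d → ℕ) → Measure (Torus d)) (Plim Qlim : Measure (Torus d))
    (hPfin : ∀ n, IsFiniteMeasure (P n)) (hQfin : ∀ n, IsFiniteMeasure (Q n))
    [IsFiniteMeasure Plim] [IsFiniteMeasure Qlim]
    (hP : ∀ f : ContinuousMap (Torus d) ℝ,
      Tendsto (fun n : Fin d → ℕ => ∫ z, f z ∂(P n)) atTop (𝓝 (∫ z, f z ∂Plim)))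
    (hQ : ∀ f : ContinuousMap (Torus d) ℝ,
      Tendsto (fun n : Fin d → ℕ => ∫ z, f z ∂(Q n)) atTop (𝓝 (∫ z, f z ∂Qlim))) :
    Filter.limsup (fun n : Fin d → ℕ => affinity (P n) (Q n)) atTop ≤ affinity Plim Qlim :=
  statement2_general P Q Plim Qlim hPfin hQfin hP hQ
end

section
/- (Two-parameter Van der Corput inequality in a C*-algebra.) Let A be a C*-algebra, let n₁, n₂ ≥ 1 and 0 ≤ h_i ≤ n_i (i = 1,2) be natural numbers, and let a_{j₁,j₂} ∈ A for 1 ≤ j₁ ≤ n₁, 1 ≤ j₂ ≤ n₂, with the convention a_{j₁,j₂} = 0 whenever j₁ or j₂ lies outside these ranges. Set H = (h₁+1)(h₂+1). Then ‖(1/(n₁n₂)) Σ_{j₁=1}^{n₁} Σ_{j₂=1}^{n₂} a_{j₁,j₂}‖² ≤ (4/H) ‖(1/(n₁n₂)) Σ_{j₁=1}^{n₁} Σ_{j₂=1}^{n₂} a_{j₁,j₂}* a_{j₁,j₂}‖ + (8/H) [ Σ_{d₁=1}^{h₁} ‖(1/(n₁n₂)) Σ_{j₁=1}^{n₁} Σ_{j₂=1}^{n₂}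 a_{j₁,j₂}* a_{j₁+d₁,j₂}‖ + Σ_{d₂=1}^{h₂} ‖(1/(n₁n₂)) Σ_{j₁=1}^{n₁} Σ_{j₂=1}^{n₂} a_{j₁,j₂}* a_{j₁,j₂+d₂}‖ + Σ_{d₁=1}^{h₁} Σ_{d₂=1}^{h₂} ‖(1/(n₁n₂)) Σ_{j₁=1}^{n₁} Σ_{j₂=1}^{n₂} a_{j₁,j₂}* a_{j₁+d₁,j₂+d₂}‖ + Σ_{d₁=1}^{h₁} Σ_{d₂=1}^{h₂} ‖(1/(n₁n₂)) Σ_{j₁=1}^{n₁} Σ_{j₂=1}^{n₂} a_{j₁+d₁,j₂}* a_{j₁,j₂+d₂}‖ ]. -/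
/-!
Extend `a` by zero to `ℤ²` and average it over the window `B = [0, h₁] × [0, h₂]`: the function
`Y j = ∑ b ∈ B, a (j + b)` lives on a box of `(n₁ + h₁)(n₂ + h₂) ≤ 4 n₁ n₂` points and sums to
`#B • ∑ a`. The C⋆-algebraic Cauchy–Schwarz inequality `(∑ y)⋆ (∑ y) ≤ N • ∑ y⋆ y` bounds the
square of that sum, and `∑ Y⋆ Y` expands into the autocorrelations `∑ k, a k⋆ a (k + d)` at the
differences `d = b' - b`, each of which occurs at most `#B` times. The autocorrelation at `-d` is the
adjoint of the one at `d`, so the box of differences `[-h₁, h₁] × [-h₂, h₂]` folds into the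
families of the statement, each counted twice.
-/

open Finset

lemma star_mul_add_star_mul_le {A : Type*} [NonUnitalRing A] [PartialOrder A] [StarRing A]
    [StarOrderedRing A] (x y : A) : star x * y + star y * x ≤ star x * x + star y * y := by
  have h := star_mul_self_nonneg (x - y)
  rw [star_sub, sub_mul, mul_sub, mul_sub] at h
  rw [← sub_nonneg]
  convert h using 1
  abel

lemma star_sum_mul_sum_le_card_nsmul {ι A : Type*} [NonUnitalRing A] [PartialOrder A]
    [StarRing A] [StarOrderedRing A] (s : Finset ι) (y : ι → A) :
    star (∑ i ∈ s, y i) * ∑ i ∈ s, y i ≤ #s • ∑ i ∈ s, star (y i) * y i := by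
  induction s using Finset.cons_induction with
  | empty => simp
  | cons i t hi ih =>
    rw [sum_cons, sum_cons, card_cons]
    set T := ∑ j ∈ t, y j
    have cross : star (y i) * T + star T * y i ≤
        #t • (star (y i) * y i) + ∑ j ∈ t, star (y j) * y j := by
      calc star (y i) * T + star T * y i = ∑ j ∈ t, (star (y i) * y j + star (y j) * y i) := by
            simp only [T, mul_sum, star_sum, sum_mul, sum_add_distrib]
        _ ≤ ∑ j ∈ t, (star (y i) * y i + star (y j) * y j) :=
            sum_le_sum fun j _ => star_mul_add_star_mul_le (y i) (y j)
        _ = _ := by rw [sum_add_distrib, sum_const]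
    calc star (y i + T) * (y i + T)
        = star (y i) * y i + (star (y i) * T + star T * y i) + star T * T := by
          rw [star_add, add_mul, mul_add, mul_add]; abel
      _ ≤ star (y i) * y i + (#t • (star (y i) * y i) + ∑ j ∈ t, star (y j) * y j) +
            #t • ∑ j ∈ t, star (y j) * y j := by gcongr
      _ = (#t + 1) • (star (y i) * y i + ∑ j ∈ t, star (y j) * y j) := by
          rw [succ_nsmul, smul_add]; abel

lemma norm_sum_sq_le_card_mul {ι A : Type*} [NonUnitalCStarAlgebra A] (s : Finset ι)
    (y : ι → A) : ‖∑ i ∈ s, y i‖ ^ 2 ≤ #s * ‖∑ i ∈ s, star (y i) * y i‖ := by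
  let := CStarAlgebra.spectralOrder A
  have := CStarAlgebra.spectralOrderedRing A
  rw [sq, ← CStarRing.norm_star_mul_self]
  calc _ ≤ ‖#s • ∑ i ∈ s, star (y i) * y i‖ :=
        CStarAlgebra.norm_le_norm_of_nonneg_of_le (star_mul_self_nonneg _)
          (star_sum_mul_sum_le_card_nsmul s y)
    _ ≤ _ := norm_nsmul_le

section Autocorrelation

variable {G A : Type*} [AddCommGroup G] [NonUnitalRing A] [StarRing A]

noncomputable def autocorrelation (a : G → A) (d : G) : A := ∑ᶠ k, star (a k) * a (k + d)

lemma finsum_star_mul_eq_autocorrelation (a : G → A) (p q : G) :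
    ∑ᶠ k, star (a (k + p)) * a (k + q) = autocorrelation a (q - p) := by
  simpa [autocorrelation, add_add_sub_cancel] using
    finsum_comp_equiv (Equiv.addRight p) (f := fun k => star (a k) * a (k + (q - p)))

lemma star_autocorrelation (a : G → A) (d : G) :
    star (autocorrelation a d) = autocorrelation a (-d) := by
  rw [autocorrelation, ← starAddEquiv_apply, AddEquiv.map_finsum]
  simpa [star_mul] using finsum_star_mul_eq_autocorrelation a d 0

end Autocorrelation

lemma norm_autocorrelation_neg {G A : Type*} [AddCommGroup G] [NonUnitalNormedRing A] [StarRing A]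
    [NormedStarGroup A] (a : G → A) (d : G) :
    ‖autocorrelation a (-d)‖ = ‖autocorrelation a d‖ := by
  rw [← star_autocorrelation, norm_star]

lemma sum_sum_sub_le_card_nsmul {G M : Type*} [AddCommGroup G] [AddCommMonoid M] [PartialOrder M]
    [IsOrderedAddMonoid M] (f : G → M) {B D : Finset G} (hf : ∀ d ∈ D, 0 ≤ f d)
    (hD : ∀ b ∈ B, ∀ b' ∈ B, b' - b ∈ D) :
    ∑ b ∈ B, ∑ b' ∈ B, f (b' - b) ≤ #B • ∑ d ∈ D, f d := by
  classical
  rw [← sum_const]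
  refine sum_le_sum fun b hb => ?_
  rw [← sum_image fun x _ y _ h => sub_left_injective h]
  exact sum_le_sum_of_subset_of_nonneg (image_subset_iff.2 fun b' hb' => hD b hb b' hb')
    fun d hd _ => hf d hd

theorem van_der_corput {G A : Type*} [AddCommGroup G] [NonUnitalCStarAlgebra A] (a : G → A)
    {B J D : Finset G} (hJ : ∀ k, a k ≠ 0 → ∀ b ∈ B, k - b ∈ J)
    (hD : ∀ b ∈ B, ∀ b' ∈ B, b' - b ∈ D) :
    (#B * ‖∑ᶠ k, a k‖) ^ 2 ≤ #J * (#B * ∑ d ∈ D, ‖autocorrelation a d‖) := by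
  set Y : G → A := fun j => ∑ b ∈ B, a (j + b)
  have sum_eq_finsum : ∀ b ∈ B, ∀ f : G → A, (∀ j, f j ≠ 0 → a (j + b) ≠ 0) →
      ∑ j ∈ J, f j = ∑ᶠ j, f j := fun b hb f hf =>
    (finsum_eq_sum_of_support_subset f fun j hj => by
      simpa using hJ _ (hf j hj) b hb).symm
  have hY : ∑ j ∈ J, Y j = #B • ∑ᶠ k, a k := by
    rw [sum_comm, ← sum_const]
    refine sum_congr rfl fun b hb => ?_
    rw [sum_eq_finsum b hb _ fun j hj => hj]
    exact finsum_comp_equiv (Equiv.addRight b)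
  have hYY : ∑ j ∈ J, star (Y j) * Y j = ∑ b ∈ B, ∑ b' ∈ B, autocorrelation a (b' - b) := by
    simp only [Y, star_sum, sum_mul_sum]
    rw [sum_comm]
    refine sum_congr rfl fun b hb => ?_
    rw [sum_comm]
    refine sum_congr rfl fun b' _ => ?_
    rw [← finsum_star_mul_eq_autocorrelation]
    exact sum_eq_finsum b hb _ fun j hj h => hj (by rw [h, star_zero, zero_mul])
  calc (#B * ‖∑ᶠ k, a k‖) ^ 2 = ‖∑ j ∈ J, Y j‖ ^ 2 := by
        rw [hY, RCLike.norm_nsmul ℝ, nsmul_eq_mul]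
    _ ≤ #J * ‖∑ j ∈ J, star (Y j) * Y j‖ := norm_sum_sq_le_card_mul J Y
    _ ≤ #J * ∑ b ∈ B, ∑ b' ∈ B, ‖autocorrelation a (b' - b)‖ := by
        rw [hYY]
        gcongr
        exact (norm_sum_le _ _).trans (sum_le_sum fun b _ => norm_sum_le _ _)
    _ ≤ #J * (#B * ∑ d ∈ D, ‖autocorrelation a d‖) := by
        gcongr
        rw [← nsmul_eq_mul]
        exact sum_sum_sub_le_card_nsmul _ (fun d _ => norm_nonneg _) hD

lemma sum_Icc_neg_natCast_eq {M : Type*} [AddCommMonoid M] (g : ℤ → M) (h : ℕ) :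
    ∑ d ∈ Icc (-(h : ℤ)) h, g d = g 0 + ∑ e ∈ Icc 1 h, (g e + g (-e)) := by
  induction h with
  | zero => simp
  | succ h ih =>
    have hIcc : Icc (-((h + 1 : ℕ) : ℤ)) (h + 1 : ℕ) =
        insert (-((h + 1 : ℕ) : ℤ)) (insert ((h + 1 : ℕ) : ℤ) (Icc (-(h : ℤ)) h)) := by
      ext x; simp only [mem_Icc, mem_insert]; omega
    rw [hIcc, sum_insert (by simp only [mem_insert, mem_Icc]; omega),
      sum_insert (by simp only [mem_Icc]; omega), ih, sum_Icc_succ_top (by omega)]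
    push_cast
    abel

lemma sum_Icc_prod_Icc_neg_eq {M : Type*} [AddCommMonoid M] (N : ℤ × ℤ → M)
    (hN : ∀ d, N (-d) = N d) (h₁ h₂ : ℕ) :
    ∑ d ∈ Icc (-(h₁ : ℤ)) h₁ ×ˢ Icc (-(h₂ : ℤ)) h₂, N d =
      N 0 + 2 • (∑ e ∈ Icc 1 h₁, N (e, 0) + ∑ e ∈ Icc 1 h₂, N (0, e) +
        ∑ e₁ ∈ Icc 1 h₁, ∑ e₂ ∈ Icc 1 h₂, N (e₁, e₂) +
        ∑ e₁ ∈ Icc 1 h₁, ∑ e₂ ∈ Icc 1 h₂, N (-e₁, e₂)) := by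
  have h0e : ∀ e : ℤ, N (0, -e) = N (0, e) := fun e => by simpa using hN (0, e)
  have he0 : ∀ e : ℤ, N (-e, 0) = N (e, 0) := fun e => by simpa using hN (e, 0)
  have hee : ∀ e₁ e₂ : ℤ, N (e₁, -e₂) = N (-e₁, e₂) := fun e₁ e₂ => by simpa using hN (-e₁, e₂)
  rw [sum_product, sum_Icc_neg_natCast_eq]
  simp only [sum_Icc_neg_natCast_eq (fun d => N (_, d)), h0e, he0, hee, neg_neg, sum_add_distrib,
    ← Prod.zero_eq_mk]
  abel

/-- Under the support condition of the theorem this is the extension of `a` by zero, since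
`Int.toNat` sends every nonpositive integer to `0`. -/
def liftToInt {A : Type*} (a : ℕ → ℕ → A) : ℤ × ℤ → A := fun k => a k.1.toNat k.2.toNat

@[simp]
lemma liftToInt_natCast {A : Type*} (a : ℕ → ℕ → A) (i j : ℕ) :
    liftToInt a ((i : ℤ), (j : ℤ)) = a i j := by
  simp [liftToInt]

lemma Int.Icc_one_natCast_eq_map (n : ℕ) : Icc (1 : ℤ) n = (Icc 1 n).map Nat.castEmbedding := by
  ext x
  simp only [mem_Icc, mem_map, Nat.castEmbedding_apply]
  constructor
  · exact fun hx => ⟨x.toNat, by omega, by omega⟩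
  · rintro ⟨j, hj, rfl⟩
    omega

lemma finsum_eq_sum_Icc_sum_Icc {M : Type*} [AddCommMonoid M] {n₁ n₂ : ℕ} (g : ℤ × ℤ → M)
    (hg : ∀ k, g k ≠ 0 → k ∈ Icc (1 : ℤ) n₁ ×ˢ Icc (1 : ℤ) n₂) :
    ∑ᶠ k, g k = ∑ j₁ ∈ Icc 1 n₁, ∑ j₂ ∈ Icc 1 n₂, g (j₁, j₂) := by
  rw [finsum_eq_sum_of_support_subset g fun k hk => hg k hk, sum_product,
    Int.Icc_one_natCast_eq_map, Int.Icc_one_natCast_eq_map, sum_map]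
  simp only [sum_map, Nat.castEmbedding_apply]

lemma mem_of_liftToInt_ne_zero {A : Type*} [Zero A] {n₁ n₂ : ℕ} {a : ℕ → ℕ → A}
    (hsupp : ∀ j₁ j₂, j₁ = 0 ∨ n₁ < j₁ ∨ j₂ = 0 ∨ n₂ < j₂ → a j₁ j₂ = 0) {k : ℤ × ℤ}
    (hk : liftToInt a k ≠ 0) : k ∈ Icc (1 : ℤ) n₁ ×ˢ Icc (1 : ℤ) n₂ := by
  contrapose! hk
  simp only [mem_product, mem_Icc] at hk
  exact hsupp _ _ (by omega)

lemma sum_Icc_star_mul_eq_autocorrelation {A : Type*} [NonUnitalRing A] [StarRing A]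
    {n₁ n₂ : ℕ} {a : ℕ → ℕ → A}
    (hsupp : ∀ j₁ j₂, j₁ = 0 ∨ n₁ < j₁ ∨ j₂ = 0 ∨ n₂ < j₂ → a j₁ j₂ = 0)
    (p₁ p₂ q₁ q₂ : ℕ) (h₁ : p₁ = 0 ∨ q₁ = 0) (h₂ : p₂ = 0 ∨ q₂ = 0) :
    ∑ j₁ ∈ Icc 1 n₁, ∑ j₂ ∈ Icc 1 n₂, star (a (j₁ + p₁) (j₂ + p₂)) * a (j₁ + q₁) (j₂ + q₂) =
      autocorrelation (liftToInt a) ((q₁ : ℤ) - p₁, (q₂ : ℤ) - p₂) := by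
  rw [← Prod.mk_sub_mk, ← finsum_star_mul_eq_autocorrelation,
    finsum_eq_sum_Icc_sum_Icc (n₁ := n₁) (n₂ := n₂)]
  · simp only [Prod.mk_add_mk, ← Nat.cast_add, liftToInt_natCast]
  · intro k hk
    have hp := mem_of_liftToInt_ne_zero hsupp (star_ne_zero.mp (left_ne_zero_of_mul hk))
    have hq := mem_of_liftToInt_ne_zero hsupp (right_ne_zero_of_mul hk)
    simp only [mem_product, mem_Icc, Prod.fst_add, Prod.snd_add] at hp hq ⊢
    omega

theorem van_der_corput_grid {A : Type*} [NonUnitalCStarAlgebra A] (n₁ n₂ h₁ h₂ : ℕ)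
    (a : ℕ → ℕ → A)
    (hsupp : ∀ j₁ j₂, j₁ = 0 ∨ n₁ < j₁ ∨ j₂ = 0 ∨ n₂ < j₂ → a j₁ j₂ = 0) :
    ((h₁ + 1) * (h₂ + 1) : ℝ) * ‖∑ j₁ ∈ Icc 1 n₁, ∑ j₂ ∈ Icc 1 n₂, a j₁ j₂‖ ^ 2 ≤
      ((n₁ + h₁) * (n₂ + h₂) : ℝ) *
        (‖∑ j₁ ∈ Icc 1 n₁, ∑ j₂ ∈ Icc 1 n₂, star (a j₁ j₂) * a j₁ j₂‖ +
          2 * (∑ d₁ ∈ Icc 1 h₁,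
              ‖∑ j₁ ∈ Icc 1 n₁, ∑ j₂ ∈ Icc 1 n₂, star (a j₁ j₂) * a (j₁ + d₁) j₂‖ +
            ∑ d₂ ∈ Icc 1 h₂,
              ‖∑ j₁ ∈ Icc 1 n₁, ∑ j₂ ∈ Icc 1 n₂, star (a j₁ j₂) * a j₁ (j₂ + d₂)‖ +
            ∑ d₁ ∈ Icc 1 h₁, ∑ d₂ ∈ Icc 1 h₂,
              ‖∑ j₁ ∈ Icc 1 n₁, ∑ j₂ ∈ Icc 1 n₂, star (a j₁ j₂) * a (j₁ + d₁) (j₂ + d₂)‖ +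
            ∑ d₁ ∈ Icc 1 h₁, ∑ d₂ ∈ Icc 1 h₂,
              ‖∑ j₁ ∈ Icc 1 n₁, ∑ j₂ ∈ Icc 1 n₂, star (a (j₁ + d₁) j₂) * a j₁ (j₂ + d₂)‖)) := by
  have hsum : ∑ j₁ ∈ Icc 1 n₁, ∑ j₂ ∈ Icc 1 n₂, a j₁ j₂ = ∑ᶠ k, liftToInt a k := by
    rw [finsum_eq_sum_Icc_sum_Icc _ fun k hk => mem_of_liftToInt_ne_zero hsupp hk]
    simp only [liftToInt_natCast]
  have corr (p₁ p₂ q₁ q₂ : ℕ) (h₁ : p₁ = 0 ∨ q₁ = 0) (h₂ : p₂ = 0 ∨ q₂ = 0) :=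
    (sum_Icc_star_mul_eq_autocorrelation hsupp p₁ p₂ q₁ q₂ h₁ h₂).symm
  have h00 : autocorrelation (liftToInt a) 0 =
      ∑ j₁ ∈ Icc 1 n₁, ∑ j₂ ∈ Icc 1 n₂, star (a j₁ j₂) * a j₁ j₂ := by
    simpa [Prod.mk_zero_zero] using corr 0 0 0 0 (by simp) (by simp)
  have he0 (e : ℕ) : autocorrelation (liftToInt a) (e, 0) =
      ∑ j₁ ∈ Icc 1 n₁, ∑ j₂ ∈ Icc 1 n₂, star (a j₁ j₂) * a (j₁ + e) j₂ := by
    simpa using corr 0 0 e 0 (by simp) (by simp)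
  have h0e (e : ℕ) : autocorrelation (liftToInt a) (0, e) =
      ∑ j₁ ∈ Icc 1 n₁, ∑ j₂ ∈ Icc 1 n₂, star (a j₁ j₂) * a j₁ (j₂ + e) := by
    simpa using corr 0 0 0 e (by simp) (by simp)
  have hee (e₁ e₂ : ℕ) : autocorrelation (liftToInt a) (e₁, e₂) =
      ∑ j₁ ∈ Icc 1 n₁, ∑ j₂ ∈ Icc 1 n₂, star (a j₁ j₂) * a (j₁ + e₁) (j₂ + e₂) := by
    simpa using corr 0 0 e₁ e₂ (by simp) (by simp)
  have hne (e₁ e₂ : ℕ) : autocorrelation (liftToInt a) (-e₁, e₂) =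
      ∑ j₁ ∈ Icc 1 n₁, ∑ j₂ ∈ Icc 1 n₂, star (a (j₁ + e₁) j₂) * a j₁ (j₂ + e₂) := by
    simpa using corr e₁ 0 0 e₂ (by simp) (by simp)
  have key := van_der_corput (liftToInt a) (B := Icc (0 : ℤ) h₁ ×ˢ Icc (0 : ℤ) h₂)
    (J := Icc (1 - h₁ : ℤ) n₁ ×ˢ Icc (1 - h₂ : ℤ) n₂) (D := Icc (-h₁ : ℤ) h₁ ×ˢ Icc (-h₂ : ℤ) h₂)
    (fun k hk b hb => by
      have := mem_of_liftToInt_ne_zero hsupp hk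
      simp only [mem_product, mem_Icc, Prod.fst_sub, Prod.snd_sub] at this hb ⊢
      omega)
    (fun b hb b' hb' => by
      simp only [mem_product, mem_Icc, Prod.fst_sub, Prod.snd_sub] at hb hb' ⊢
      omega)
  rw [sum_Icc_prod_Icc_neg_eq _ (norm_autocorrelation_neg _) h₁ h₂] at key
  simp only [h00, he0, h0e, hee, hne, ← hsum] at key
  have hB : (#(Icc (0 : ℤ) h₁ ×ˢ Icc (0 : ℤ) h₂) : ℝ) = (h₁ + 1) * (h₂ + 1) := by
    simp [Int.card_Icc]
  have hJ : (#(Icc (1 - h₁ : ℤ) n₁ ×ˢ Icc (1 - h₂ : ℤ) n₂) : ℝ) = (n₁ + h₁) * (n₂ + h₂) := by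
    have (n h : ℕ) : ((n : ℤ) + 1 - (1 - h)).toNat = n + h := by omega
    simp [Int.card_Icc, this]
  rw [hB, hJ, nsmul_eq_mul, Nat.cast_ofNat] at key
  refine le_of_mul_le_mul_left ?_ (by positivity : (0 : ℝ) < (h₁ + 1) * (h₂ + 1))
  linear_combination key

lemma inv_mul_sq_le_of_mul_sq_le {r c H s t x : ℝ} (hr : 0 ≤ r) (hH : 0 < H) (hc : c ≤ 4 * r)
    (ht : 0 ≤ t) (hx : 0 ≤ x) (h : H * s ^ 2 ≤ c * (t + 2 * x)) :
    (r⁻¹ * s) ^ 2 ≤ 4 / H * (r⁻¹ * t) + 8 / H * (r⁻¹ * x) := by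
  rcases hr.eq_or_lt with rfl | hr
  · simp
  rw [div_mul_eq_mul_div, div_mul_eq_mul_div, ← add_div, le_div_iff₀ hH]
  calc (r⁻¹ * s) ^ 2 * H = r⁻¹ * r⁻¹ * (H * s ^ 2) := by ring
    _ ≤ r⁻¹ * r⁻¹ * (4 * r * (t + 2 * x)) :=
        mul_le_mul_of_nonneg_left (h.trans (mul_le_mul_of_nonneg_right hc (by positivity)))
          (by positivity)
    _ = 4 * (r⁻¹ * t) + 8 * (r⁻¹ * x) := by field_simp; ring

theorem statement10_general {A : Type*} [NormedRing A] [StarRing A] [CStarRing A]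
    [NormedAlgebra ℂ A] [StarModule ℂ A] [CompleteSpace A]
    (n₁ n₂ h₁ h₂ : ℕ) (hh₁ : h₁ ≤ n₁) (hh₂ : h₂ ≤ n₂)
    (a : ℕ → ℕ → A)
    (hsupp : ∀ j₁ j₂, j₁ = 0 ∨ n₁ < j₁ ∨ j₂ = 0 ∨ n₂ < j₂ → a j₁ j₂ = 0) :
    ‖((n₁ * n₂ : ℂ))⁻¹ • ∑ j₁ ∈ Icc 1 n₁, ∑ j₂ ∈ Icc 1 n₂, a j₁ j₂‖ ^ 2 ≤
      (4 / (((h₁ : ℝ) + 1) * ((h₂ : ℝ) + 1))) *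
          ‖((n₁ * n₂ : ℂ))⁻¹ • ∑ j₁ ∈ Icc 1 n₁, ∑ j₂ ∈ Icc 1 n₂,
              star (a j₁ j₂) * a j₁ j₂‖ +
        (8 / (((h₁ : ℝ) + 1) * ((h₂ : ℝ) + 1))) *
          ((∑ d₁ ∈ Icc 1 h₁,
              ‖((n₁ * n₂ : ℂ))⁻¹ • ∑ j₁ ∈ Icc 1 n₁, ∑ j₂ ∈ Icc 1 n₂,
                  star (a j₁ j₂) * a (j₁ + d₁) j₂‖) +
            (∑ d₂ ∈ Icc 1 h₂,
              ‖((n₁ * n₂ : ℂ))⁻¹ • ∑ j₁ ∈ Icc 1 n₁, ∑ j₂ ∈ Icc 1 n₂,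
                  star (a j₁ j₂) * a j₁ (j₂ + d₂)‖) +
            (∑ d₁ ∈ Icc 1 h₁, ∑ d₂ ∈ Icc 1 h₂,
              ‖((n₁ * n₂ : ℂ))⁻¹ • ∑ j₁ ∈ Icc 1 n₁, ∑ j₂ ∈ Icc 1 n₂,
                  star (a j₁ j₂) * a (j₁ + d₁) (j₂ + d₂)‖) +
            (∑ d₁ ∈ Icc 1 h₁, ∑ d₂ ∈ Icc 1 h₂,
              ‖((n₁ * n₂ : ℂ))⁻¹ • ∑ j₁ ∈ Icc 1 n₁, ∑ j₂ ∈ Icc 1 n₂,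
                  star (a (j₁ + d₁) j₂) * a j₁ (j₂ + d₂)‖)) := by
  let : CStarAlgebra A := {}
  have grid := van_der_corput_grid n₁ n₂ h₁ h₂ a hsupp
  have hwidth : ((n₁ + h₁) * (n₂ + h₂) : ℝ) ≤ 4 * (n₁ * n₂) := by
    have h₁' : (h₁ : ℝ) ≤ n₁ := by exact_mod_cast hh₁
    have h₂' : (h₂ : ℝ) ≤ n₂ := by exact_mod_cast hh₂
    nlinarith
  simp only [norm_smul, norm_inv, norm_mul, Complex.norm_natCast, ← mul_sum, ← mul_add]
  exact inv_mul_sq_le_of_mul_sq_le (by positivity) (by positivity) hwidth (norm_nonneg _)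
    (by positivity) grid

/-- two-parameter Van der Corput inequality in a C*-algebra:
for `a_{j₁,j₂} ∈ A` supported in `1 ≤ j₁ ≤ n₁`, `1 ≤ j₂ ≤ n₂`, and `0 ≤ h_i ≤ n_i`,
with `H = (h₁+1)(h₂+1)`,
`‖(1/(n₁n₂)) ∑_{j₁,j₂} a_{j₁,j₂}‖² ≤ (4/H) ‖(1/(n₁n₂)) ∑ a* a‖
  + (8/H) [∑_{d₁=1}^{h₁} ‖(1/(n₁n₂)) ∑ a_{j₁,j₂}* a_{j₁+d₁,j₂}‖
  + ∑_{d₂=1}^{h₂} ‖(1/(n₁n₂)) ∑ a_{j₁,j₂}* a_{j₁,j₂+d₂}‖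
  + ∑_{d₁,d₂} ‖(1/(n₁n₂)) ∑ a_{j₁,j₂}* a_{j₁+d₁,j₂+d₂}‖
  + ∑_{d₁,d₂} ‖(1/(n₁n₂)) ∑ a_{j₁+d₁,j₂}* a_{j₁,j₂+d₂}‖]`. -/
theorem statement10 {A : Type*} [NormedRing A] [StarRing A] [CStarRing A]
    [NormedAlgebra ℂ A] [StarModule ℂ A] [CompleteSpace A]
    (n₁ n₂ h₁ h₂ : ℕ) (hn₁ : 1 ≤ n₁) (hn₂ : 1 ≤ n₂) (hh₁ : h₁ ≤ n₁) (hh₂ : h₂ ≤ n₂)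
    (a : ℕ → ℕ → A)
    (hsupp : ∀ j₁ j₂, j₁ = 0 ∨ n₁ < j₁ ∨ j₂ = 0 ∨ n₂ < j₂ → a j₁ j₂ = 0) :
    ‖((n₁ * n₂ : ℂ))⁻¹ • ∑ j₁ ∈ Icc 1 n₁, ∑ j₂ ∈ Icc 1 n₂, a j₁ j₂‖ ^ 2 ≤
      (4 / (((h₁ : ℝ) + 1) * ((h₂ : ℝ) + 1))) *
          ‖((n₁ * n₂ : ℂ))⁻¹ • ∑ j₁ ∈ Icc 1 n₁, ∑ j₂ ∈ Icc 1 n₂,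
              star (a j₁ j₂) * a j₁ j₂‖ +
        (8 / (((h₁ : ℝ) + 1) * ((h₂ : ℝ) + 1))) *
          ((∑ d₁ ∈ Icc 1 h₁,
              ‖((n₁ * n₂ : ℂ))⁻¹ • ∑ j₁ ∈ Icc 1 n₁, ∑ j₂ ∈ Icc 1 n₂,
                  star (a j₁ j₂) * a (j₁ + d₁) j₂‖) +
            (∑ d₂ ∈ Icc 1 h₂,
              ‖((n₁ * n₂ : ℂ))⁻¹ • ∑ j₁ ∈ Icc 1 n₁, ∑ j₂ ∈ Icc 1 n₂,
                  star (a j₁ j₂) * a j₁ (j₂ + d₂)‖) +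
            (∑ d₁ ∈ Icc 1 h₁, ∑ d₂ ∈ Icc 1 h₂,
              ‖((n₁ * n₂ : ℂ))⁻¹ • ∑ j₁ ∈ Icc 1 n₁, ∑ j₂ ∈ Icc 1 n₂,
                  star (a j₁ j₂) * a (j₁ + d₁) (j₂ + d₂)‖) +
            (∑ d₁ ∈ Icc 1 h₁, ∑ d₂ ∈ Icc 1 h₂,
              ‖((n₁ * n₂ : ℂ))⁻¹ • ∑ j₁ ∈ Icc 1 n₁, ∑ j₂ ∈ Icc 1 n₂,
                  star (a (j₁ + d₁) j₂) * a j₁ (j₂ + d₂)‖)) :=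
  statement10_general n₁ n₂ h₁ h₂ hh₁ hh₂ a hsupp
end

section
/- Let a : ℕ^d → ℂ be bounded (sup_{k∈ℕ^d} |a(k)| < ∞) and suppose: (1) a has a correlation, and its spectral measure σ_a is discrete, i.e., there is a countable set D ⊆ 𝕋^d with σ_a(𝕋^d ∖ D) = 0; (2) the amplitude Γ_a(z) = lim_n (1/|n+1|) Σ_{k=0}^{n} a(k) conj(z)^k exists for every z ∈ 𝕋^d; (3) σ_a({z}) = |Γ_a(z)|² for every z ∈ 𝕋^d. Then a is Besicovitch: for every ε > 0 there exists a trigonometric polynomial P with limsup_n (1/|n+1|) Σ_{k=0}^{n} |a(k) − P(k)| < ε. -/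
/-!
Keep finitely many atoms `z` of the discrete measure `σ` carrying all but `ε² / 2` of its mass
and put `P k = ∑ Γ z · z ^ k`. The characters `k ↦ z ^ k` are orthonormal for the box means and
`Γ z` is the box mean of `a · conj (z ^ k)`, so by Bessel's identity the mean of `|a - P|²`
tends to `γ 0 - ∑ |Γ z|² = σ 𝕋^d - ∑ σ {z} ≤ ε² / 2`. By Cauchy–Schwarz the mean of `|a - P|`
is at most the square root of the mean of `|a - P|²`, so its limsup is at most `ε / √2`.
-/

open MeasureTheory Filter
open scoped Topology ComplexConjugate

noncomputable section

/-- `z ^ m = z₁^{m₁} ⋯ z_d^{m_d}` for `z ∈ 𝕋^d` and `m ∈ ℤ^d`. -/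
def zpowM {d : ℕ} (z : Torus d) (m : Fin d → ℤ) : ℂ := ∏ j, (z.1 j) ^ (m j)

/-- `|n+1| = (n₁+1) ⋯ (n_d+1)`. -/
def boxVol {d : ℕ} (n : Fin d → ℕ) : ℝ := ∏ j, ((n j : ℝ) + 1)

/-- The extension of a weight sequence `a : ℕ^d → ℂ` to `ℤ^d`, by `0` off `ℕ^d`. -/
def extZ {d : ℕ} (a : (Fin d → ℕ) → ℂ) (k : Fin d → ℤ) : ℂ :=
  if ∀ j, 0 ≤ k j then a fun j => (k j).toNat else 0

/-- `a` has correlation `γ`. -/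
def HasCorrelation {d : ℕ} (a : (Fin d → ℕ) → ℂ) (γ : (Fin d → ℤ) → ℂ) : Prop :=
  ∀ m : Fin d → ℤ,
    Tendsto
      (fun n : Fin d → ℕ =>
        ((boxVol n : ℝ) : ℂ)⁻¹ *
          ∑ k ∈ Finset.Icc (fun j => -(n j : ℤ)) (fun j => (n j : ℤ)),
            conj (extZ a k) * extZ a (k + m))
      atTop (𝓝 (γ m))

/-- `σ` is a spectral measure for `γ` : `∫_{𝕋^d} z^m dσ(z) = γ m` for all `m ∈ ℤ^d`. -/
def IsSpectralMeasure {d : ℕ} (γ : (Fin d → ℤ) → ℂ) (σ : Measure (Torus d)) : Prop :=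
  ∀ m : Fin d → ℤ, ∫ z, zpowM z m ∂σ = γ m

/-- A trigonometric polynomial: a finite linear combination of the characters
`k ↦ z^k` with `z ∈ 𝕋^d`. -/
def IsTrigPoly {d : ℕ} (P : (Fin d → ℕ) → ℂ) : Prop :=
  ∃ (r : ℕ) (c : Fin r → ℂ) (z : Fin r → Torus d),
    ∀ k : Fin d → ℕ, P k = ∑ α, c α * zpowM (z α) fun j => (k j : ℤ)

open Finset

def boxAvg {d : ℕ} (f : (Fin d → ℕ) → ℂ) (n : Fin d → ℕ) : ℂ :=
  ((boxVol n : ℝ) : ℂ)⁻¹ * ∑ k ∈ Icc 0 n, f k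

section boxAvg

variable {d : ℕ} (f g : (Fin d → ℕ) → ℂ) (n : Fin d → ℕ)

lemma card_Icc_zero_eq_boxVol : ((#(Icc 0 n) : ℕ) : ℝ) = boxVol n := by
  simp [Pi.card_Icc, boxVol]

lemma boxVol_pos : 0 < boxVol n := by
  unfold boxVol
  positivity

lemma boxAvg_add : boxAvg (fun k => f k + g k) n = boxAvg f n + boxAvg g n := by
  simp only [boxAvg, sum_add_distrib, mul_add]

lemma boxAvg_sub : boxAvg (fun k => f k - g k) n = boxAvg f n - boxAvg g n := by
  simp only [boxAvg, sum_sub_distrib, mul_sub]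

lemma boxAvg_const_mul (c : ℂ) : boxAvg (fun k => c * f k) n = c * boxAvg f n := by
  simp only [boxAvg, ← mul_sum]
  ring

lemma boxAvg_sum {ι : Type*} (s : Finset ι) (F : ι → (Fin d → ℕ) → ℂ) :
    boxAvg (fun k => ∑ α ∈ s, F α k) n = ∑ α ∈ s, boxAvg (F α) n := by
  simp only [boxAvg, mul_sum]
  exact sum_comm

lemma boxAvg_conj : boxAvg (fun k => conj (f k)) n = conj (boxAvg f n) := by
  simp [boxAvg]

lemma boxAvg_const_one : boxAvg (fun _ => 1) n = 1 := by
  rw [boxAvg, sum_const, nsmul_one, ← Complex.ofReal_natCast, card_Icc_zero_eq_boxVol,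
    inv_mul_cancel₀ (by exact_mod_cast (boxVol_pos n).ne')]

lemma boxAvg_ofReal (g : (Fin d → ℕ) → ℝ) :
    boxAvg (fun k => (g k : ℂ)) n = (((boxVol n)⁻¹ * ∑ k ∈ Icc 0 n, g k : ℝ) : ℂ) := by
  simp [boxAvg]

lemma inv_boxVol_mul_sum_le_sqrt (g : (Fin d → ℕ) → ℝ) :
    (boxVol n)⁻¹ * ∑ k ∈ Icc 0 n, g k ≤ √((boxVol n)⁻¹ * ∑ k ∈ Icc 0 n, g k ^ 2) := by
  refine Real.le_sqrt_of_sq_le ?_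
  simpa only [← card_Icc_zero_eq_boxVol, inv_mul_eq_div] using sum_div_card_sq_le_sum_sq_div_card

end boxAvg

section characters

lemma norm_inv_mul_geom_sum_le_one {w : ℂ} (hw : ‖w‖ = 1) (m : ℕ) :
    ‖((m : ℂ) + 1)⁻¹ * ∑ t ∈ range (m + 1), w ^ t‖ ≤ 1 := by
  have hm : ‖((m : ℂ) + 1)‖ = (m : ℝ) + 1 := by exact_mod_cast Complex.norm_natCast (m + 1)
  rw [norm_mul, norm_inv, hm, inv_mul_le_one₀ (by positivity)]
  calc ‖∑ t ∈ range (m + 1), w ^ t‖ ≤ ∑ t ∈ range (m + 1), ‖w ^ t‖ := norm_sum_le _ _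
    _ = (m : ℝ) + 1 := by simp [hw]

lemma tendsto_inv_mul_geom_sum_zero {w : ℂ} (hw : ‖w‖ = 1) (hw1 : w ≠ 1) :
    Tendsto (fun m : ℕ => ((m : ℂ) + 1)⁻¹ * ∑ t ∈ range (m + 1), w ^ t) atTop (𝓝 0) := by
  have hbound : ∀ m : ℕ, ‖∑ t ∈ range (m + 1), w ^ t‖ ≤ 2 / ‖w - 1‖ := fun m => by
    rw [geom_sum_eq hw1, norm_div]
    gcongr
    calc ‖w ^ (m + 1) - 1‖ ≤ ‖w ^ (m + 1)‖ + ‖(1 : ℂ)‖ := norm_sub_le _ _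
      _ = 2 := by rw [norm_pow, hw]; norm_num
  have hinv : Tendsto (fun m : ℕ => ((m : ℂ) + 1)⁻¹) atTop (𝓝 0) := by
    simpa using tendsto_one_div_add_atTop_nhds_zero_nat (𝕜 := ℂ)
  exact hinv.zero_mul_isBoundedUnder_le
    (isBoundedUnder_of ⟨2 / ‖w - 1‖, fun m => hbound m⟩)

variable {d : ℕ}

lemma boxAvg_prod_pow (w : Fin d → ℂ) (n : Fin d → ℕ) :
    boxAvg (fun k => ∏ j, w j ^ k j) n
      = ∏ j, ((n j : ℂ) + 1)⁻¹ * ∑ t ∈ range (n j + 1), w j ^ t := by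
  have hbox : Icc 0 n = Fintype.piFinset fun j => range (n j + 1) := by
    rw [Pi.Icc_eq]
    congr 1
    funext j
    rw [Nat.range_succ_eq_Icc_zero]
    rfl
  rw [boxAvg, hbox, ← prod_univ_sum, prod_mul_distrib, boxVol]
  push_cast
  rw [prod_inv_distrib]

lemma tendsto_boxAvg_prod_pow_zero {w : Fin d → ℂ} (hw : ∀ j, ‖w j‖ = 1) {j₀ : Fin d}
    (hj₀ : w j₀ ≠ 1) : Tendsto (boxAvg fun k => ∏ j, w j ^ k j) atTop (𝓝 0) := by
  have hcoord : Tendsto (fun n : Fin d → ℕ => n j₀) atTop atTop :=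
    tendsto_atTop_atTop.2 fun b => ⟨fun _ => b, fun n hn => hn j₀⟩
  rw [tendsto_zero_iff_norm_tendsto_zero]
  refine squeeze_zero (fun n => norm_nonneg _) (fun n => ?_)
    ((tendsto_zero_iff_norm_tendsto_zero.1
      (tendsto_inv_mul_geom_sum_zero (hw j₀) hj₀)).comp hcoord)
  rw [boxAvg_prod_pow, norm_prod, ← mul_prod_erase univ _ (mem_univ j₀)]
  exact mul_le_of_le_one_right (norm_nonneg _)
    (prod_le_one (fun j _ => norm_nonneg _) fun j _ => norm_inv_mul_geom_sum_le_one (hw j) _)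

lemma conj_mul_eq_one_iff {x y : ℂ} (hx : ‖x‖ = 1) : conj x * y = 1 ↔ x = y := by
  have hxx : conj x * x = 1 := by simp [Complex.conj_mul', hx]
  have hx0 : conj x ≠ 0 := by simp [← norm_ne_zero_iff, hx]
  rw [← hxx, mul_right_inj' hx0, eq_comm]

lemma conj_zpowM_mul_zpowM (z w : Torus d) (k : Fin d → ℕ) :
    conj (zpowM z fun j => (k j : ℤ)) * zpowM w (fun j => (k j : ℤ))
      = ∏ j, (conj (z.1 j) * w.1 j) ^ k j := by
  simp only [zpowM, map_prod, zpow_natCast, map_pow, ← prod_mul_distrib, mul_pow]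

lemma tendsto_boxAvg_conj_zpowM_mul_zpowM (z w : Torus d) :
    Tendsto (boxAvg fun k => conj (zpowM z fun j => (k j : ℤ)) * zpowM w fun j => (k j : ℤ))
      atTop (𝓝 (if z = w then 1 else 0)) := by
  simp only [conj_zpowM_mul_zpowM]
  split_ifs with hzw
  · subst hzw
    have hone : ∀ j, conj (z.1 j) * z.1 j = 1 := fun j => (conj_mul_eq_one_iff (z.2 j)).2 rfl
    simp only [hone, one_pow, prod_const_one]
    exact tendsto_const_nhds.congr fun n => (boxAvg_const_one n).symm
  · obtain ⟨j₀, hj₀⟩ : ∃ j, z.1 j ≠ w.1 j := by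
      by_contra! h
      exact hzw (Subtype.ext (funext h))
    refine tendsto_boxAvg_prod_pow_zero (fun j => ?_) (j₀ := j₀) ?_
    · simp [z.2 j, w.2 j]
    · rwa [Ne, conj_mul_eq_one_iff (z.2 j₀)]

end characters

section bessel

variable {d : ℕ} {ι : Type*} [Fintype ι]

lemma conj_sub_sum_mul_sub_sum (x : ℂ) (c e : ι → ℂ) :
    conj (x - ∑ α, c α * e α) * (x - ∑ α, c α * e α)
      = conj x * x - ∑ α, conj (c α) * (x * conj (e α)) - ∑ α, c α * conj (x * conj (e α))
        + ∑ α, ∑ β, conj (c α) * c β * (conj (e α) * e β) := by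
  rw [map_sub, sub_mul, mul_sub, mul_sub, map_sum, sum_mul_sum, mul_sum, sum_mul]
  simp only [map_mul, Complex.conj_conj]
  ring_nf
  ac_rfl

/-- Bessel's identity for box means. -/
theorem tendsto_boxAvg_conj_mul_sub_sum [DecidableEq ι] {f : (Fin d → ℕ) → ℂ}
    {e : ι → (Fin d → ℕ) → ℂ} {A : ℂ} {c : ι → ℂ}
    (hf : Tendsto (boxAvg fun k => conj (f k) * f k) atTop (𝓝 A))
    (hc : ∀ α, Tendsto (boxAvg fun k => f k * conj (e α k)) atTop (𝓝 (c α)))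
    (he : ∀ α β, Tendsto (boxAvg fun k => conj (e α k) * e β k) atTop
      (𝓝 (if α = β then 1 else 0))) :
    Tendsto (boxAvg fun k => conj (f k - ∑ α, c α * e α k) * (f k - ∑ α, c α * e α k))
      atTop (𝓝 (A - ∑ α, conj (c α) * c α)) := by
  have hexpand : ∀ n, boxAvg (fun k => conj (f k) * f k) n
      - ∑ α, conj (c α) * boxAvg (fun k => f k * conj (e α k)) n
      - ∑ α, c α * conj (boxAvg (fun k => f k * conj (e α k)) n)
      + ∑ α, ∑ β, conj (c α) * c β * boxAvg (fun k => conj (e α k) * e β k) n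
      = boxAvg (fun k => conj (f k - ∑ α, c α * e α k) * (f k - ∑ α, c α * e α k)) n :=
    fun n => by
      simp only [conj_sub_sum_mul_sub_sum, boxAvg_add, boxAvg_sub, boxAvg_sum, boxAvg_const_mul,
        boxAvg_conj]
  have hlimit : A - ∑ α, conj (c α) * c α = A - ∑ α, conj (c α) * c α
      - ∑ α, c α * conj (c α) + ∑ α, ∑ β, conj (c α) * c β * if α = β then 1 else 0 := by
    simp only [mul_ite, mul_one, mul_zero, sum_ite_eq, mem_univ, if_true, mul_comm (c _)]
    ring
  rw [hlimit]
  refine Tendsto.congr hexpand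
    (((hf.sub (tendsto_finsetSum univ fun α _ => (hc α).const_mul (conj (c α)))).sub
      (tendsto_finsetSum univ fun α _ =>
        ((Complex.continuous_conj.tendsto (c α)).comp (hc α)).const_mul (c α))).add
      (tendsto_finsetSum univ fun α _ => tendsto_finsetSum univ fun β _ =>
        (he α β).const_mul (conj (c α) * c β)))

end bessel

section sequences

variable {d : ℕ}

lemma sum_Icc_conj_extZ_mul_extZ (a : (Fin d → ℕ) → ℂ) (n : Fin d → ℕ) :
    ∑ k ∈ Icc (fun j => -(n j : ℤ)) (fun j => (n j : ℤ)), conj (extZ a k) * extZ a k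
      = ∑ k ∈ Icc 0 n, conj (a k) * a k := by
  symm
  refine sum_of_injOn (fun k j => (k j : ℤ)) (fun k _ l _ h => ?_) (fun k hk => ?_)
    (fun k hk hk' => ?_) (fun k _ => by simp [extZ])
  · funext j
    simpa using congrFun h j
  · simp only [coe_Icc, Set.mem_Icc] at hk ⊢
    exact ⟨fun j => by simp, fun j => by simpa using hk.2 j⟩
  · have hneg : ¬ ∀ j, 0 ≤ k j := fun h0 => hk' ⟨fun j => (k j).toNat, by
      simp only [coe_Icc, Set.mem_Icc, mem_Icc] at hk ⊢
      exact ⟨fun j => Nat.zero_le _, fun j => by simpa using hk.2 j⟩, by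
      funext j
      simp [h0 j]⟩
    simp [extZ, hneg]

lemma HasCorrelation.tendsto_boxAvg_conj_mul_self {a : (Fin d → ℕ) → ℂ}
    {γ : (Fin d → ℤ) → ℂ} (hγ : HasCorrelation a γ) :
    Tendsto (boxAvg fun k => conj (a k) * a k) atTop (𝓝 (γ 0)) := by
  have h0 := hγ 0
  simp only [add_zero, sum_Icc_conj_extZ_mul_extZ] at h0
  exact h0

lemma IsSpectralMeasure.apply_zero {γ : (Fin d → ℤ) → ℂ} {σ : Measure (Torus d)}
    (hσ : IsSpectralMeasure γ σ) : γ 0 = σ.real Set.univ := by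
  simp [← hσ 0, zpowM]

lemma isTrigPoly_sum {ι : Type*} [Fintype ι] (c : ι → ℂ) (z : ι → Torus d) :
    IsTrigPoly fun k => ∑ α, c α * zpowM (z α) fun j => (k j : ℤ) := by
  let e := Fintype.equivFin ι
  exact ⟨Fintype.card ι, c ∘ e.symm, z ∘ e.symm, fun k => (e.symm.sum_comp _).symm⟩

end sequences

lemma exists_finset_measureReal_univ_le {α : Type*} [MeasurableSpace α] (μ : Measure α)
    [IsFiniteMeasure μ] {D : Set α} (hD : D.Countable) (hDc : μ Dᶜ = 0) {δ : ℝ} (hδ : 0 < δ) :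
    ∃ t : Finset α, μ.real Set.univ ≤ ∑ z ∈ t, μ.real {z} + δ := by
  suffices h : ∃ t : Finset α, μ Set.univ ≤ ∑ z ∈ t, μ {z} + ENNReal.ofReal δ by
    obtain ⟨t, ht⟩ := h
    refine ⟨t, ?_⟩
    have hsum : ∑ z ∈ t, μ {z} ≠ ⊤ := ENNReal.sum_ne_top.2 fun z _ => measure_ne_top μ {z}
    have := ENNReal.toReal_mono (ENNReal.add_ne_top.2 ⟨hsum, ENNReal.ofReal_ne_top⟩) ht
    rwa [ENNReal.toReal_add hsum ENNReal.ofReal_ne_top,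
      ENNReal.toReal_sum fun z _ => measure_ne_top μ {z}, ENNReal.toReal_ofReal hδ.le] at this
  by_cases h0 : μ Set.univ = 0
  · exact ⟨∅, by simp [h0]⟩
  have hcover : μ Set.univ ≤ ∑' z : D, μ {(z : α)} :=
    calc μ Set.univ ≤ μ D + μ Dᶜ := by
          simpa only [Set.union_compl_self] using measure_union_le D Dᶜ
      _ = μ (⋃ z ∈ D, {z}) := by rw [hDc, add_zero, Set.biUnion_of_singleton]
      _ ≤ ∑' z : D, μ {(z : α)} := measure_biUnion_le μ hD _
  obtain ⟨s, hs⟩ := lt_iSup_iff.1 <| (ENNReal.sub_lt_self (measure_ne_top μ _) h0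
    (ENNReal.ofReal_pos.2 hδ).ne').trans_le (hcover.trans_eq ENNReal.tsum_eq_iSup_sum)
  refine ⟨s.map (Function.Embedding.subtype _), ?_⟩
  rw [sum_map]
  exact tsub_le_iff_right.1 hs.le

lemma limsup_inv_boxVol_mul_sum_le_sqrt {d : ℕ} {g : (Fin d → ℕ) → ℝ} (hg : ∀ k, 0 ≤ g k)
    {L : ℝ}
    (h : Tendsto (fun n => (boxVol n)⁻¹ * ∑ k ∈ Icc 0 n, g k ^ 2) atTop (𝓝 L)) :
    limsup (fun n => (boxVol n)⁻¹ * ∑ k ∈ Icc 0 n, g k) atTop ≤ √L :=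
  calc limsup (fun n => (boxVol n)⁻¹ * ∑ k ∈ Icc 0 n, g k) atTop
      ≤ limsup (fun n => √((boxVol n)⁻¹ * ∑ k ∈ Icc 0 n, g k ^ 2)) atTop :=
        limsup_le_limsup (.of_forall fun n => inv_boxVol_mul_sum_le_sqrt n g)
          (isCoboundedUnder_le_of_le atTop fun n =>
            mul_nonneg (inv_nonneg.2 (boxVol_pos n).le) (sum_nonneg fun k _ => hg k))
          h.sqrt.isBoundedUnder_le
    _ = √L := h.sqrt.limsup_eq

theorem statement12_general {d : ℕ} (a : (Fin d → ℕ) → ℂ)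
    (γ : (Fin d → ℤ) → ℂ) (σ : Measure (Torus d)) (Γ : Torus d → ℂ)
    (hγ : HasCorrelation a γ) (hfin : IsFiniteMeasure σ) (hσ : IsSpectralMeasure γ σ)
    (hdisc : ∃ D : Set (Torus d), D.Countable ∧ σ Dᶜ = 0)
    (hΓ : ∀ z : Torus d,
      Tendsto
        (fun n : Fin d → ℕ =>
          ((boxVol n : ℝ) : ℂ)⁻¹ *
            ∑ k ∈ Finset.Icc 0 n, a k * conj (zpowM z fun j => (k j : ℤ)))
        atTop (𝓝 (Γ z)))
    (hpoint : ∀ z : Torus d, σ {z} = ENNReal.ofReal (‖Γ z‖ ^ 2)) :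
    ∀ ε : ℝ, 0 < ε → ∃ P : (Fin d → ℕ) → ℂ, IsTrigPoly P ∧
      Filter.limsup
          (fun n : Fin d → ℕ =>
            (boxVol n)⁻¹ * ∑ k ∈ Finset.Icc 0 n, ‖a k - P k‖)
          atTop < ε := by
  intro ε hε
  obtain ⟨D, hD, hDc⟩ := hdisc
  obtain ⟨t, ht⟩ := exists_finset_measureReal_univ_le σ hD hDc (by positivity : 0 < ε ^ 2 / 2)
  set P : (Fin d → ℕ) → ℂ := fun k => ∑ z : t, Γ z * zpowM z fun j => (k j : ℤ)
  have hbessel := tendsto_boxAvg_conj_mul_sub_sum hγ.tendsto_boxAvg_conj_mul_self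
    (e := fun (z : t) k => zpowM z fun j => (k j : ℤ)) (c := fun z => Γ z)
    (fun z => by unfold boxAvg; exact hΓ z)
    fun z w => by
      convert tendsto_boxAvg_conj_zpowM_mul_zpowM (z : Torus d) w using 3
      exact Subtype.coe_inj.symm
  have hatom : ∀ z, σ.real {z} = ‖Γ z‖ ^ 2 := fun z => by
    rw [measureReal_def, hpoint, ENNReal.toReal_ofReal (by positivity)]
  have hmeanSq : Tendsto (fun n => (boxVol n)⁻¹ * ∑ k ∈ Icc 0 n, ‖a k - P k‖ ^ 2) atTop
      (𝓝 (σ.real Set.univ - ∑ z ∈ t, σ.real {z})) := by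
    rw [← tendsto_ofReal_iff]
    convert hbessel using 1
    · funext n
      simp only [Complex.conj_mul', ← boxAvg_ofReal]
      push_cast
      rfl
    · simp only [Complex.conj_mul', hσ.apply_zero, hatom, ← sum_coe_sort t]
      push_cast
      rfl
  refine ⟨P, isTrigPoly_sum _ _, ?_⟩
  calc limsup _ atTop ≤ √(σ.real Set.univ - ∑ z ∈ t, σ.real {z}) :=
        limsup_inv_boxVol_mul_sum_le_sqrt (fun k => norm_nonneg _) hmeanSq
    _ < ε := by
        rw [Real.sqrt_lt' hε]
        linarith [pow_pos hε 2]

/-- conversely, a bounded sequence `a` which has a correlation with a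
discrete spectral measure, whose amplitude `Γ_a(z)` exists for every `z ∈ 𝕋^d`, and
with `σ_a {z} = |Γ_a(z)|²` for all `z`, is Besicovitch: for every `ε > 0` there is a
trigonometric polynomial `P` with `limsup_n (1/|n+1|) ∑_{k=0}^{n} |a k − P k| < ε`. -/
theorem statement12 {d : ℕ} (hd : 1 ≤ d) (a : (Fin d → ℕ) → ℂ)
    (hbdd : ∃ C : ℝ, ∀ k, ‖a k‖ ≤ C)
    (γ : (Fin d → ℤ) → ℂ) (σ : Measure (Torus d)) (Γ : Torus d → ℂ)
    (hγ : HasCorrelation a γ) (hfin : IsFiniteMeasure σ) (hσ : IsSpectralMeasure γ σ)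
    (hdisc : ∃ D : Set (Torus d), D.Countable ∧ σ Dᶜ = 0)
    (hΓ : ∀ z : Torus d,
      Tendsto
        (fun n : Fin d → ℕ =>
          ((boxVol n : ℝ) : ℂ)⁻¹ *
            ∑ k ∈ Finset.Icc 0 n, a k * conj (zpowM z fun j => (k j : ℤ)))
        atTop (𝓝 (Γ z)))
    (hpoint : ∀ z : Torus d, σ {z} = ENNReal.ofReal (‖Γ z‖ ^ 2)) :
    ∀ ε : ℝ, 0 < ε → ∃ P : (Fin d → ℕ) → ℂ, IsTrigPoly P ∧
      Filter.limsup
          (fun n : Fin d → ℕ =>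
            (boxVol n)⁻¹ * ∑ k ∈ Finset.Icc 0 n, ‖a k - P k‖)
          atTop < ε :=
  statement12_general a γ σ Γ hγ hfin hσ hdisc hΓ hpoint
end
end

section
/- Let d ≥ 1 and define a : ℕ^d → ℂ by a(k) = (−1)^{⌊log(k₁ + ⋯ + k_d + 1)⌋}, where log is the natural logarithm and ⌊·⌋ is the integer floor. Then a has a correlation and γ_a(m) = 1 for every m ∈ ℤ^d; equivalently, the spectral measure of a is the Dirac point mass at the point (1, …, 1) ∈ 𝕋^d. -/
open MeasureTheory Filter
open scoped Topology ComplexConjugate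

noncomputable section

/-!
For `k, k + m ∈ ℕ^d` we have `conj (a k) * a (k + m) = 1` unless `⌊log (S + 1)⌋` differs at
`S = k₁ + ⋯ + k_d` and at `S + (m₁ + ⋯ + m_d)`. Since `S ↦ ⌊log (S + 1)⌋` is monotone, it changes
value at most `O(log N)` times below `N`, so such `S` form a set of density zero in `ℕ`. Its
preimage under the sum map has density zero in the boxes `[0, n]`: a level set of the sum meets
the box in at most `|n+1| / (max_j n_j + 1)` points. The remaining `k` (those with
`k + m ∉ ℕ^d`) lie in slabs `k_j < -m_j`, also of density zero, so the averages tend to `1`.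
-/

open Finset

section Box

variable {d : ℕ}

lemma card_Icc_zero (n : Fin d → ℕ) : #(Icc 0 n) = ∏ i, (n i + 1) := by
  simp [Pi.card_Icc]

lemma card_Icc_zero_eq_mul_update (n : Fin d → ℕ) (j : Fin d) :
    #(Icc 0 n) = (n j + 1) * #(Icc 0 (Function.update n j 0)) := by
  rw [card_Icc_zero, card_Icc_zero, ← mul_prod_erase _ _ (mem_univ j),
    ← mul_prod_erase _ _ (mem_univ j), Function.update_self, zero_add, one_mul]
  refine congrArg _ (prod_congr rfl fun i hi => ?_)
  rw [Function.update_of_ne (ne_of_mem_erase hi)]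

-- The fibres of `π` in the box have at most `#(Icc 0 n) / (n j + 1)` points.
lemma card_filter_Icc_mul_le (n : Fin d → ℕ) (j : Fin d) {π : (Fin d → ℕ) → ℕ}
    (hπ : ∀ k k', π k = π k' → Function.update k j 0 = Function.update k' j 0 → k j = k' j)
    (p : ℕ → Prop) [DecidablePred p] (R : Finset ℕ) (hR : ∀ k ∈ Icc 0 n, π k ∈ R) :
    #{k ∈ Icc 0 n | p (π k)} * (n j + 1) ≤ #{x ∈ R | p x} * #(Icc 0 n) := by
  have hfib : #{k ∈ Icc 0 n | p (π k)} ≤ #{x ∈ R | p x} * #(Icc 0 (Function.update n j 0)) := by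
    rw [← card_product]
    refine card_le_card_of_injOn (fun k => (π k, Function.update k j 0)) (fun k hk => ?_)
      fun k _ k' _ h => ?_
    · obtain ⟨hk, hpk⟩ := mem_filter.1 hk
      refine mem_product.2 ⟨mem_filter.2 ⟨hR k hk, hpk⟩, mem_Icc.2 ⟨fun _ => Nat.zero_le _, ?_⟩⟩
      exact update_le_update_iff.2 ⟨le_rfl, fun i _ => (mem_Icc.1 hk).2 i⟩
    · obtain ⟨hπkk', hupd⟩ := Prod.mk.inj h
      calc k = Function.update (Function.update k j 0) j (k j) := by simp
        _ = Function.update (Function.update k' j 0) j (k' j) := by rw [hupd, hπ k k' hπkk' hupd]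
        _ = k' := by simp
  rw [card_Icc_zero_eq_mul_update n j]
  calc #{k ∈ Icc 0 n | p (π k)} * (n j + 1)
      ≤ #{x ∈ R | p x} * #(Icc 0 (Function.update n j 0)) * (n j + 1) :=
        Nat.mul_le_mul_right _ hfib
    _ = _ := by ring

lemma sum_eq_apply_add_sum_update (k : Fin d → ℕ) (j : Fin d) :
    ∑ i, k i = k j + ∑ i, Function.update k j 0 i := by
  rw [sum_update_of_mem (mem_univ j), zero_add, sdiff_singleton_eq_erase,
    add_sum_erase _ _ (mem_univ j)]

end Box

section Density

variable {d : ℕ}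

def HasDensityZero (q : ℕ → Prop) [DecidablePred q] : Prop :=
  Tendsto (fun N => (#{x ∈ range N | q x} : ℝ) / N) atTop (𝓝 0)

def HasBoxDensityZero (p : (Fin d → ℕ) → Prop) [DecidablePred p] : Prop :=
  Tendsto (fun n => (#{k ∈ Icc 0 n | p k} : ℝ) / #(Icc 0 n)) atTop (𝓝 0)

lemma HasBoxDensityZero.mono {p q : (Fin d → ℕ) → Prop} [DecidablePred p] [DecidablePred q]
    (hq : HasBoxDensityZero q) (hpq : ∀ k, p k → q k) : HasBoxDensityZero p :=
  squeeze_zero (fun _ => by positivity) (fun _ => div_le_div_of_nonneg_right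
    (Nat.cast_le.2 (card_le_card (monotone_filter_right _ fun k _ => hpq k)))
    (Nat.cast_nonneg _)) hq

lemma HasBoxDensityZero.or {p q : (Fin d → ℕ) → Prop} [DecidablePred p] [DecidablePred q]
    (hp : HasBoxDensityZero p) (hq : HasBoxDensityZero q) :
    HasBoxDensityZero (fun k => p k ∨ q k) := by
  refine squeeze_zero (fun _ => by positivity) (fun n => ?_) (by simpa using hp.add hq)
  rw [← add_div]
  refine div_le_div_of_nonneg_right ?_ (Nat.cast_nonneg _)
  rw [filter_or]
  exact_mod_cast card_union_le _ _

lemma hasBoxDensityZero_exists {p : Fin d → (Fin d → ℕ) → Prop} [∀ j, DecidablePred (p j)]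
    (hp : ∀ j, HasBoxDensityZero (p j)) : HasBoxDensityZero (fun k => ∃ j, p j k) := by
  refine squeeze_zero (fun _ => by positivity) (fun n => ?_)
    (by simpa using tendsto_finsetSum univ fun j _ => hp j)
  rw [← sum_div]
  refine div_le_div_of_nonneg_right ?_ (Nat.cast_nonneg _)
  have hsub : {k ∈ Icc 0 n | ∃ j, p j k} ⊆ univ.biUnion fun j => {k ∈ Icc 0 n | p j k} := by
    intro k hk
    obtain ⟨hk, j, hj⟩ := mem_filter.1 hk
    exact mem_biUnion.2 ⟨j, mem_univ j, mem_filter.2 ⟨hk, hj⟩⟩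
  exact_mod_cast (card_le_card hsub).trans card_biUnion_le

lemma tendsto_apply_atTop (j : Fin d) : Tendsto (fun n : Fin d → ℕ => n j) atTop atTop :=
  tendsto_atTop_atTop.2 fun b => ⟨fun _ => b, fun _ hn => hn j⟩

lemma hasBoxDensityZero_apply_lt (j : Fin d) (r : ℕ) : HasBoxDensityZero (fun k => k j < r) := by
  have hlim : Tendsto (fun n : Fin d → ℕ => (r : ℝ) / (n j + 1)) atTop (𝓝 0) :=
    (tendsto_const_div_atTop_nhds_zero_nat (r : ℝ)).comp
      ((tendsto_add_atTop_nat 1).comp (tendsto_apply_atTop j)) |>.congr fun _ => by simp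
  refine squeeze_zero (fun _ => by positivity) (fun n => ?_) hlim
  have hcount := card_filter_Icc_mul_le n j (π := fun k => k j) (fun _ _ h _ => h) (· < r)
    (range (n j + 1)) fun k hk => mem_range.2 (Nat.lt_succ_of_le ((mem_Icc.1 hk).2 j))
  have hr : #{x ∈ range (n j + 1) | x < r} ≤ r :=
    (card_le_card (fun x hx => mem_range.2 (mem_filter.1 hx).2)).trans (card_range r).le
  have hbox : (0 : ℝ) < #(Icc 0 n) := by simp [Nat.pos_iff_ne_zero]
  rw [div_le_div_iff₀ hbox (by positivity)]
  exact_mod_cast hcount.trans (Nat.mul_le_mul_right _ hr)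

lemma HasDensityZero.comp_sum (hd : 1 ≤ d) {q : ℕ → Prop} [DecidablePred q]
    (hq : HasDensityZero q) : HasBoxDensityZero (fun k : Fin d → ℕ => q (∑ i, k i)) := by
  have hN : Tendsto (fun n : Fin d → ℕ => ∑ i, n i + 1) atTop atTop :=
    tendsto_atTop_mono (fun n => (single_le_sum (fun i _ => Nat.zero_le (n i))
      (mem_univ ⟨0, hd⟩)).trans (Nat.le_succ _)) (tendsto_apply_atTop ⟨0, hd⟩)
  refine squeeze_zero (fun _ => by positivity) (fun n => ?_)
    (by simpa using (hq.comp hN).const_mul (d : ℝ))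
  have : Nonempty (Fin d) := ⟨⟨0, hd⟩⟩
  obtain ⟨j, -, hj⟩ := exists_max_image univ n univ_nonempty
  have hcount := card_filter_Icc_mul_le n j (π := fun k => ∑ i, k i)
    (fun k k' hsum hupd => by
      rw [sum_eq_apply_add_sum_update k j, sum_eq_apply_add_sum_update k' j, hupd] at hsum
      omega)
    q (range (∑ i, n i + 1)) fun k hk => mem_range.2 (Nat.lt_succ_of_le
      (sum_le_sum fun i _ => (mem_Icc.1 hk).2 i))
  have hsum_le : ∑ i, n i + 1 ≤ d * (n j + 1) := by
    calc ∑ i, n i + 1 ≤ d * n j + 1 := by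
          simpa using Nat.add_le_add_right
            (sum_le_card_nsmul univ n _ fun i _ => hj i (mem_univ i)) 1
      _ ≤ d * (n j + 1) := by nlinarith
  have hbox : (0 : ℝ) < #(Icc 0 n) := by simp [Nat.pos_iff_ne_zero]
  rw [mul_div_assoc', div_le_div_iff₀ hbox (by positivity)]
  have key : #{k ∈ Icc 0 n | q (∑ i, k i)} * (∑ i, n i + 1)
      ≤ d * #{x ∈ range (∑ i, n i + 1) | q x} * #(Icc 0 n) :=
    calc _ ≤ #{k ∈ Icc 0 n | q (∑ i, k i)} * (d * (n j + 1)) := Nat.mul_le_mul_left _ hsum_le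
      _ = d * (#{k ∈ Icc 0 n | q (∑ i, k i)} * (n j + 1)) := by ring
      _ ≤ _ := by rw [mul_assoc]; exact Nat.mul_le_mul_left _ hcount
  exact_mod_cast key

lemma norm_inv_card_mul_sum_sub_one_le {ι : Type*} {s : Finset ι} (hs : s.Nonempty) {g : ι → ℂ}
    (hg : ∀ i ∈ s, ‖g i‖ ≤ 1) :
    ‖(#s : ℂ)⁻¹ * ∑ i ∈ s, g i - 1‖ ≤ 2 * #{i ∈ s | g i ≠ 1} / #s := by
  have hs' : (#s : ℂ) ≠ 0 := Nat.cast_ne_zero.2 hs.card_ne_zero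
  have hsum : (#s : ℂ)⁻¹ * ∑ i ∈ s, g i - 1 = (#s : ℂ)⁻¹ * ∑ i ∈ s, (g i - 1) := by
    rw [sum_sub_distrib, sum_const, nsmul_one, mul_sub, inv_mul_cancel₀ hs']
  rw [hsum, norm_mul, norm_inv, Complex.norm_natCast, inv_mul_eq_div]
  gcongr
  calc ‖∑ i ∈ s, (g i - 1)‖ ≤ ∑ i ∈ s, ‖g i - 1‖ := norm_sum_le _ _
    _ = ∑ i ∈ s with g i ≠ 1, ‖g i - 1‖ :=
        (sum_filter_of_ne fun i _ h => by simpa [sub_eq_zero] using h).symm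
    _ ≤ ∑ i ∈ s with g i ≠ 1, 2 := sum_le_sum fun i hi => by
        have := hg i (mem_filter.1 hi).1
        calc ‖g i - 1‖ ≤ ‖g i‖ + ‖(1 : ℂ)‖ := norm_sub_le _ _
          _ ≤ 2 := by rw [norm_one]; linarith
    _ = 2 * #{i ∈ s | g i ≠ 1} := by simp [mul_comm]

lemma tendsto_box_average_of_hasBoxDensityZero {g : (Fin d → ℕ) → ℂ} (hg : ∀ k, ‖g k‖ ≤ 1)
    (h : HasBoxDensityZero (g · ≠ 1)) :
    Tendsto (fun n => (#(Icc 0 n) : ℂ)⁻¹ * ∑ k ∈ Icc 0 n, g k) atTop (𝓝 1) := by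
  rw [tendsto_iff_norm_sub_tendsto_zero]
  refine squeeze_zero (fun _ => norm_nonneg _) (fun n => ?_) (by simpa using h.const_mul 2)
  rw [← mul_div_assoc]
  exact norm_inv_card_mul_sum_sub_one_le (nonempty_Icc.2 fun _ => Nat.zero_le _) fun k _ => hg k

end Density

section LogFloor

-- Each counted `x` contributes at least `1` to `∑ x < N, (ψ (x + c) - ψ x)`, which telescopes.
lemma card_filter_ne_add_le {ψ : ℕ → ℤ} (hψ : Monotone ψ) (N c : ℕ) :
    (#{x ∈ range N | ψ x ≠ ψ (x + c)} : ℤ) ≤ c * (ψ (N + c) - ψ 0) := by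
  have htel : ∑ x ∈ range N, (ψ (x + c) - ψ x) = ∑ i ∈ range c, (ψ (N + i) - ψ i) := by
    have h1 := sum_range_add ψ c N
    have h2 := sum_range_add ψ N c
    rw [add_comm c N] at h1
    simp only [sum_sub_distrib, add_comm _ c]
    linarith
  calc (#{x ∈ range N | ψ x ≠ ψ (x + c)} : ℤ)
      = ∑ x ∈ range N, if ψ x ≠ ψ (x + c) then 1 else 0 := by simp [card_filter]
    _ ≤ ∑ x ∈ range N, (ψ (x + c) - ψ x) := sum_le_sum fun x _ => by
        have := hψ (Nat.le_add_right x c)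
        split_ifs with h <;> omega
    _ = ∑ i ∈ range c, (ψ (N + i) - ψ i) := htel
    _ ≤ ∑ i ∈ range c, (ψ (N + c) - ψ 0) := sum_le_sum fun i hi => by
        have := hψ (Nat.add_le_add_left (mem_range.1 hi).le N)
        have := hψ (Nat.zero_le i)
        omega
    _ = c * (ψ (N + c) - ψ 0) := by simp [mul_sub]

-- `x ↦ min x (x + M)` turns a jump across a shift by `M < 0` into one across a shift by `|M|`.
lemma card_filter_shift_ne_le (ψ : ℕ → ℤ) (N : ℕ) (M : ℤ) :
    #{x ∈ range N | 0 ≤ ((x : ℕ) : ℤ) + M ∧ ψ x ≠ ψ (x + M).toNat}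
      ≤ #{x ∈ range N | ψ x ≠ ψ (x + M.natAbs)} := by
  refine card_le_card_of_injOn (fun x => if 0 ≤ M then x else x - M.natAbs) (fun x hx => ?_)
    fun x hx x' hx' h => ?_
  · obtain ⟨hxN, hxM, hne⟩ := mem_filter.1 hx
    rw [mem_range] at hxN
    refine mem_filter.2 ⟨mem_range.2 ?_, ?_⟩ <;> dsimp only
    · split_ifs <;> omega
    · split_ifs with hM
      · rwa [show x + M.natAbs = (x + M).toNat by omega]
      · rw [show x - M.natAbs + M.natAbs = x by omega, show x - M.natAbs = (x + M).toNat by omega]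
        exact hne.symm
  · obtain ⟨-, hxM, -⟩ := mem_filter.1 hx
    obtain ⟨-, hxM', -⟩ := mem_filter.1 hx'
    simp only at h
    split_ifs at h <;> omega

def logFloor (x : ℕ) : ℤ := ⌊Real.log (x + 1)⌋

lemma logFloor_mono : Monotone logFloor := fun x y h =>
  Int.floor_mono (Real.log_le_log (by positivity) (by gcongr))

lemma logFloor_le_log (x : ℕ) : (logFloor x : ℝ) ≤ Real.log (x + 1) := Int.floor_le _

lemma hasDensityZero_logFloor_shift_ne (M : ℤ) :
    HasDensityZero (fun x => 0 ≤ ((x : ℕ) : ℤ) + M ∧ logFloor x ≠ logFloor (x + M).toNat) := by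
  set c := M.natAbs
  have hlog : Tendsto (fun N : ℕ => Real.log (N + c + 1) / N) atTop (𝓝 0) := by
    have hx : Tendsto (fun N : ℕ => (N : ℝ) + c + 1) atTop atTop :=
      tendsto_atTop_add_const_right _ _ (tendsto_atTop_add_const_right _ _
        tendsto_natCast_atTop_atTop)
    refine ((Real.tendsto_pow_log_div_mul_add_atTop 1 (-(c + 1)) 1 one_ne_zero).comp hx).congr
      fun N => ?_
    simp only [Function.comp_apply, pow_one]
    ring_nf
  refine squeeze_zero (fun _ => by positivity) (fun N => ?_) (by simpa using hlog.const_mul (c : ℝ))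
  rw [mul_div_assoc']
  refine div_le_div_of_nonneg_right ?_ (Nat.cast_nonneg _)
  have hcount : (#{x ∈ range N | 0 ≤ ((x : ℕ) : ℤ) + M ∧ logFloor x ≠ logFloor (x + M).toNat} : ℤ)
      ≤ c * logFloor (N + c) := by
    have := card_filter_ne_add_le logFloor_mono N c
    rw [show logFloor 0 = 0 by simp [logFloor], sub_zero] at this
    exact (Nat.cast_le.2 (card_filter_shift_ne_le logFloor N M)).trans this
  calc (#{x ∈ range N | 0 ≤ ((x : ℕ) : ℤ) + M ∧ logFloor x ≠ logFloor (x + M).toNat} : ℝ)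
      ≤ c * logFloor (N + c) := by exact_mod_cast hcount
    _ ≤ c * Real.log (N + c + 1) := by
        gcongr
        simpa using logFloor_le_log (N + c)

end LogFloor

section LogSign

variable {d : ℕ} {a : (Fin d → ℕ) → ℂ}

lemma sum_Icc_natCast_eq_sum_Icc_neg {M : Type*} [AddCommMonoid M] (n : Fin d → ℕ)
    {F : (Fin d → ℤ) → M} (hF : ∀ k, F k ≠ 0 → ∀ j, 0 ≤ k j) :
    ∑ k ∈ Icc 0 n, F (fun j => k j)
      = ∑ k ∈ Icc (fun j => -(n j : ℤ)) (fun j => (n j : ℤ)), F k := by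
  refine sum_bij_ne_zero (fun k _ _ j => (k j : ℤ)) (fun k hk _ => ?_)
    (fun k _ _ k' _ _ h => funext fun j => by simpa using congrFun h j)
    (fun k hk hFk => ?_) fun _ _ _ => rfl
  · have := (mem_Icc.1 hk).2
    exact mem_Icc.2 ⟨fun j => by simp, fun j => by simpa using this j⟩
  · have hcast : (fun j => ((k j).toNat : ℤ)) = k :=
      funext fun j => Int.toNat_of_nonneg (hF k hFk j)
    refine ⟨fun j => (k j).toNat, mem_Icc.2 ⟨fun j => Nat.zero_le _, fun j => ?_⟩, by rwa [hcast],
      hcast⟩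
    have := (mem_Icc.1 hk).2 j
    simp only [Int.toNat_le]
    exact this

lemma extZ_natCast (a : (Fin d → ℕ) → ℂ) (k : Fin d → ℕ) : extZ a (fun j => (k j : ℤ)) = a k := by
  simp [extZ]

lemma conj_neg_one_zpow_mul_self (z : ℤ) : conj ((-1 : ℂ) ^ z) * (-1) ^ z = 1 := by
  rw [map_zpow₀, map_neg, map_one, ← mul_zpow]
  norm_num

variable (ha : ∀ k, a k = (-1) ^ logFloor (∑ i, k i))
include ha

lemma norm_extZ_le (k : Fin d → ℤ) : ‖extZ a k‖ ≤ 1 := by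
  unfold extZ
  split_ifs
  · simp [ha]
  · simp

lemma exists_lt_or_logFloor_ne_of_conj_mul_ne_one (m : Fin d → ℤ) (k : Fin d → ℕ)
    (h : conj (a k) * extZ a ((fun j => (k j : ℤ)) + m) ≠ 1) :
    (∃ j, k j < (-m j).toNat) ∨
      (0 ≤ ((∑ i, k i : ℕ) : ℤ) + ∑ i, m i ∧
        logFloor (∑ i, k i) ≠ logFloor (((∑ i, k i : ℕ) : ℤ) + ∑ i, m i).toNat) := by
  by_contra! hgood
  obtain ⟨hk, hlog⟩ := hgood
  have hkm : ∀ j, 0 ≤ (k j : ℤ) + m j := fun j => by have := hk j; omega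
  have hsum_nonneg : 0 ≤ ((∑ i, k i : ℕ) : ℤ) + ∑ i, m i := by
    push_cast
    rw [← sum_add_distrib]
    exact sum_nonneg fun j _ => hkm j
  have hsum : (∑ i, ((k i : ℤ) + m i).toNat : ℕ) = (((∑ i, k i : ℕ) : ℤ) + ∑ i, m i).toNat := by
    have : ((∑ i, ((k i : ℤ) + m i).toNat : ℕ) : ℤ) = ((∑ i, k i : ℕ) : ℤ) + ∑ i, m i := by
      push_cast
      rw [sum_congr rfl fun j _ => Int.toNat_of_nonneg (hkm j), sum_add_distrib]
    omega
  apply h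
  rw [extZ, if_pos (show ∀ j, 0 ≤ ((fun j => (k j : ℤ)) + m) j from hkm)]
  simp only [Pi.add_apply]
  rw [ha, ha, hsum, ← hlog hsum_nonneg]
  exact conj_neg_one_zpow_mul_self _

end LogSign

/-- the sequence `a(k) = (−1)^{⌊log(k₁+⋯+k_d+1)⌋}` has a correlation with
`γ_a(m) = 1` for all `m ∈ ℤ^d`; equivalently, its spectral measure is the Dirac point
mass at `(1, …, 1) ∈ 𝕋^d`. -/
theorem statement14 {d : ℕ} (hd : 1 ≤ d)
    (a : (Fin d → ℕ) → ℂ)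
    (ha : ∀ k : Fin d → ℕ, a k = (-1 : ℂ) ^ ⌊Real.log ((∑ j, (k j : ℝ)) + 1)⌋) :
    HasCorrelation a (fun _ => 1) ∧
      IsSpectralMeasure (fun _ => (1 : ℂ))
        (Measure.dirac (⟨fun _ => 1, fun _ => norm_one⟩ : Torus d)) := by
  have ha' : ∀ k, a k = (-1) ^ logFloor (∑ i, k i) := fun k => by simp [ha, logFloor]
  refine ⟨fun m => ?_, fun m => by simp [zpowM]⟩
  set g : (Fin d → ℕ) → ℂ := fun k => conj (a k) * extZ a ((fun j => (k j : ℤ)) + m)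
  have hg : ∀ k, ‖g k‖ ≤ 1 := fun k => by
    simpa [g, ha' k] using norm_extZ_le ha' ((fun j => (k j : ℤ)) + m)
  have hbad : HasBoxDensityZero (g · ≠ 1) :=
    (hasBoxDensityZero_exists fun j => hasBoxDensityZero_apply_lt j _).or
      ((hasDensityZero_logFloor_shift_ne _).comp_sum hd) |>.mono
      (exists_lt_or_logFloor_ne_of_conj_mul_ne_one ha' m)
  have hsum : ∀ n : Fin d → ℕ, ∑ k ∈ Icc (fun j => -(n j : ℤ)) (fun j => (n j : ℤ)),
      conj (extZ a k) * extZ a (k + m) = ∑ k ∈ Icc 0 n, g k := fun n => by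
    rw [← sum_Icc_natCast_eq_sum_Icc_neg n
      fun k hk => not_not.1 fun hneg => hk (by simp [extZ, hneg])]
    simp only [g, extZ_natCast]
  have hvol : ∀ n, boxVol n = #(Icc 0 n) := fun n : Fin d → ℕ => by simp [boxVol, card_Icc_zero]
  simpa [hsum, hvol] using tendsto_box_average_of_hasBoxDensityZero hg hbad

end
end
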